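/- arXiv:2604.23306 — 9 statements merged into one kernel-verified Lean document; each statement's English description precedes it below -/
import Mathlib

section
/- Let n ≥ 1, let a < b, let g_1, …, g_{2n} be continuous real-valued functions forming a Tchebyshev system on [a,b], and let ω be a continuous, strictly positive weight function on [a,b]. If (x_1 < … < x_n; w_1, …, w_n) and (y_1 < … < y_n; v_1, …, v_n) are two n-point positive quadrature rules on [a,b] that are both exact for every g_j (j = 1, …, 2n) with respect to ω, then x_k = y_k and w_k = v_k for all k = 1, …, n (the generalised Gauss quadrature rule is unique). -/
open MeasureTheory

/-- `g 0, …, g (m-1)` form a Tchebyshev system on `[a,b]`. -/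
def IsTchebyshevSystem (a b : ℝ) {m : ℕ} (g : Fin m → ℝ → ℝ) : Prop :=
  ∀ y : Fin m → ℝ, StrictMono y → (∀ i, y i ∈ Set.Icc a b) →
    (Matrix.of fun i j => g j (y i)).det ≠ 0

/-- Linear independence of point evaluations: if a finitely supported coefficient
function annihilates all `2n` functions of a Tchebyshev system on at most `2n`
points of `[a,b]`, then all coefficients vanish. -/
lemma tcheb_coeff_zero {n : ℕ} (hn : 1 ≤ n) {a b : ℝ} (hab : a < b) {g : Fin (2 * n) → ℝ → ℝ}
    (hT : IsTchebyshevSystem a b g)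
    (S : Finset ℝ) (hS : ↑S ⊆ Set.Icc a b) (hcard : S.card ≤ 2 * n)
    (c : ℝ → ℝ) (hc : ∀ j, ∑ s ∈ S, c s * g j s = 0) :
    ∀ s ∈ S, c s = 0 := by
  classical
  obtain ⟨U, hSU, hUsub, hUcard⟩ :=
    (Set.Icc_infinite hab).exists_superset_ncard_eq hS S.finite_toSet
      (k := 2 * n) (by simpa using hcard)
  have hUfin : U.Finite := Set.finite_of_ncard_ne_zero (by rw [hUcard]; omega)
  set T : Finset ℝ := hUfin.toFinset with hTdef
  have hTU : (T : Set ℝ) = U := hUfin.coe_toFinset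
  have hTcard : T.card = 2 * n := by
    rw [← Set.ncard_coe_finset, hTU, hUcard]
  set z : Fin (2 * n) → ℝ := fun i => T.orderEmbOfFin hTcard i with hzdef
  have hzmono : StrictMono z := (T.orderEmbOfFin hTcard).strictMono
  have hzmem : ∀ i, z i ∈ T := fun i => T.orderEmbOfFin_mem hTcard i
  have hzIcc : ∀ i, z i ∈ Set.Icc a b := fun i => hUsub (by rw [← hTU]; exact_mod_cast hzmem i)
  have hdet : (Matrix.of fun i j => g j (z i)).det ≠ 0 := hT z hzmono hzIcc
  -- T is the image of z
  have hTim : T = Finset.image z Finset.univ := by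
    apply Finset.coe_injective
    rw [Finset.coe_image, Finset.coe_univ, Set.image_univ]
    exact (Finset.range_orderEmbOfFin T hTcard).symm
  have hST : S ⊆ T := fun s hs => by
    rw [← Finset.mem_coe, hTU]; exact hSU hs
  set c' : ℝ → ℝ := fun t => if t ∈ S then c t else 0 with hc'def
  have hsumT : ∀ j : Fin (2 * n), ∑ t ∈ T, c' t * g j t = 0 := by
    intro j
    rw [← Finset.sum_subset hST (fun t _ ht => by simp [hc'def, ht])]
    rw [← hc j]
    exact Finset.sum_congr rfl fun s hs => by simp [hc'def, hs]
  have hvm : Matrix.vecMul (fun i => c' (z i)) (Matrix.of fun i j => g j (z i)) = 0 := by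
    funext j
    have : ∑ i, c' (z i) * g j (z i) = ∑ t ∈ T, c' t * g j t := by
      rw [hTim, Finset.sum_image (fun i _ i' _ h => hzmono.injective h)]
    simpa [Matrix.vecMul, dotProduct] using this.trans (hsumT j)
  have hzero : (fun i => c' (z i)) = 0 := Matrix.eq_zero_of_vecMul_eq_zero hdet hvm
  intro s hs
  obtain ⟨i, -, hi⟩ := Finset.mem_image.mp (hTim ▸ hST hs)
  have := congrFun hzero i
  rw [hi] at this
  simpa [hc'def, hs] using this

lemma sum_coeff_mul {n : ℕ} (x : Fin n → ℝ) (u : Fin n → ℝ) (S : Finset ℝ)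
    (hxS : ∀ k, x k ∈ S) (f : ℝ → ℝ) :
    ∑ s ∈ S, (∑ k, if x k = s then u k else 0) * f s = ∑ k, u k * f (x k) := by
  classical
  simp_rw [Finset.sum_mul, ite_mul, zero_mul]
  rw [Finset.sum_comm]
  exact Finset.sum_congr rfl fun k _ => by rw [Finset.sum_ite_eq S (x k)]; simp [hxS k]

lemma coeff_at_point {n : ℕ} {x : Fin n → ℝ} (hx : Function.Injective x)
    (u : Fin n → ℝ) (k : Fin n) :
    (∑ l, if x l = x k then u l else 0) = u k := by
  classical
  rw [Finset.sum_eq_single k (fun l _ hl => by simp [hx.ne hl]) (by simp)]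
  simp

/-- Uniqueness of the `n`-point generalised Gauss quadrature rule for a
Tchebyshev system of `2n` continuous functions. -/
theorem generalised_gauss_quadrature_unique
    (n : ℕ) (hn : 1 ≤ n) (a b : ℝ) (hab : a < b)
    (g : Fin (2 * n) → ℝ → ℝ)
    (hg : ∀ j, ContinuousOn (g j) (Set.Icc a b))
    (hT : IsTchebyshevSystem a b g)
    (ω : ℝ → ℝ) (hω : ContinuousOn ω (Set.Icc a b))
    (hωpos : ∀ x ∈ Set.Icc a b, 0 < ω x)
    (x w : Fin n → ℝ) (hx : StrictMono x) (hxmem : ∀ k, x k ∈ Set.Icc a b)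
    (hw : ∀ k, 0 < w k)
    (hexx : ∀ j, ∫ t in a..b, g j t * ω t = ∑ k, w k * g j (x k))
    (y v : Fin n → ℝ) (hy : StrictMono y) (hymem : ∀ k, y k ∈ Set.Icc a b)
    (hv : ∀ k, 0 < v k)
    (hexy : ∀ j, ∫ t in a..b, g j t * ω t = ∑ k, v k * g j (y k)) :
    x = y ∧ w = v := by
  classical
  have hsum : ∀ j, ∑ k, w k * g j (x k) = ∑ k, v k * g j (y k) :=
    fun j => (hexx j).symm.trans (hexy j)
  -- Step 1: the node sets coincide.
  set S : Finset ℝ := Finset.image x Finset.univ ∪ Finset.image y Finset.univ with hSdef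
  have hxS : ∀ k, x k ∈ S := fun k => Finset.mem_union_left _ (Finset.mem_image_of_mem x (Finset.mem_univ k))
  have hyS : ∀ k, y k ∈ S := fun k => Finset.mem_union_right _ (Finset.mem_image_of_mem y (Finset.mem_univ k))
  have hSsub : (S : Set ℝ) ⊆ Set.Icc a b := by
    intro s hs
    rw [Finset.coe_union, Finset.coe_image, Finset.coe_image] at hs
    rcases hs with ⟨k, -, rfl⟩ | ⟨k, -, rfl⟩
    exacts [hxmem k, hymem k]
  have hScard : S.card ≤ 2 * n := by
    calc S.card ≤ (Finset.image x Finset.univ).card + (Finset.image y Finset.univ).card :=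
          Finset.card_union_le _ _
    _ ≤ n + n := by
        have h1 : (Finset.image x Finset.univ).card ≤ n := by
          simpa using Finset.card_image_le (f := x) (s := Finset.univ)
        have h2 : (Finset.image y Finset.univ).card ≤ n := by
          simpa using Finset.card_image_le (f := y) (s := Finset.univ)
        omega
    _ = 2 * n := by ring
  set c : ℝ → ℝ := fun t =>
    (∑ k, if x k = t then w k else 0) - (∑ k, if y k = t then v k else 0) with hcdef
  have hc : ∀ j, ∑ s ∈ S, c s * g j s = 0 := by
    intro j
    simp_rw [hcdef, sub_mul, Finset.sum_sub_distrib]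
    rw [sum_coeff_mul x w S hxS, sum_coeff_mul y v S hyS, hsum j, sub_self]
  have hczero := tcheb_coeff_zero hn hab hT S hSsub hScard c hc
  have hrange : ∀ k, ∃ l, y l = x k := by
    intro k
    by_contra hcon
    push_neg at hcon
    have h0 := hczero (x k) (hxS k)
    rw [hcdef] at h0
    simp only [coeff_at_point hx.injective w k] at h0
    have : (∑ l, if y l = x k then v l else 0) = 0 := by
      refine Finset.sum_eq_zero fun l _ => ?_
      simp [hcon l]
    rw [this, sub_zero] at h0
    exact (hw k).ne' h0
  have hrange' : ∀ k, ∃ l, x l = y k := by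
    intro k
    by_contra hcon
    push_neg at hcon
    have h0 := hczero (y k) (hyS k)
    rw [hcdef] at h0
    simp only [coeff_at_point hy.injective v k] at h0
    have : (∑ l, if x l = y k then w l else 0) = 0 := by
      refine Finset.sum_eq_zero fun l _ => ?_
      simp [hcon l]
    rw [this, zero_sub, neg_eq_zero] at h0
    exact (hv k).ne' h0
  -- equal ranges + strict monotonicity ⇒ equal node vectors
  have hxcard : (Finset.image x Finset.univ).card = n := by
    rw [Finset.card_image_of_injective _ hx.injective, Finset.card_univ, Fintype.card_fin]
  have hyx : ∀ k, y k ∈ Finset.image x Finset.univ := by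
    intro k
    obtain ⟨l, hl⟩ := hrange' k
    exact Finset.mem_image.mpr ⟨l, Finset.mem_univ l, hl⟩
  have hxx : ∀ k, x k ∈ Finset.image x Finset.univ :=
    fun k => Finset.mem_image_of_mem x (Finset.mem_univ k)
  have hxy : x = y := by
    rw [Finset.orderEmbOfFin_unique hxcard hxx hx,
        Finset.orderEmbOfFin_unique hxcard hyx hy]
  refine ⟨hxy, ?_⟩
  -- Step 2: equal weights.
  subst hxy
  set c' : ℝ → ℝ := fun t => ∑ k, if x k = t then (w k - v k) else 0 with hc'def
  have hc' : ∀ j, ∑ s ∈ S, c' s * g j s = 0 := by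
    intro j
    rw [hc'def, sum_coeff_mul x (fun k => w k - v k) S hxS]
    simp_rw [sub_mul, Finset.sum_sub_distrib]
    rw [hsum j, sub_self]
  have hc'zero := tcheb_coeff_zero hn hab hT S hSsub hScard c' hc'
  funext k
  have h0 := hc'zero (x k) (hxS k)
  simp only [hc'def, coeff_at_point hx.injective (fun k => w k - v k) k] at h0
  linarith
end

section
/- Let n ≥ 1, let a < b, let g_1, …, g_{2n} be continuous real-valued functions forming a Tchebyshev system on [a,b], and let ω be a continuous, strictly positive weight function on [a,b]. If (a = x_0 < … < x_n = b; w_0, …, w_n) and (a = y_0 < … < y_n = b; v_0, …, v_n) are two closed (n+1)-point positive quadrature rules on [a,b] that are both exact for every g_j (j = 1, …, 2n) with respect to ω, then x_k = y_k and w_k = v_k for all k = 0, …, n (the generalised Gauss–Lobatto quadrature rule is unique). -/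
open MeasureTheory

/-- A strictly monotone self-map of `Fin m` is the identity. -/
lemma strictMono_fin_id {m : ℕ} {σ : Fin m → Fin m} (hσ : StrictMono σ) : σ = id := by
  haveI : WellFoundedLT (Fin m) := inferInstance
  haveI : WellFoundedGT (Fin m) := inferInstance
  funext k
  exact le_antisymm hσ.apply_le hσ.le_apply

/-- Uniqueness of the closed `(n+1)`-point generalised Gauss–Lobatto quadrature
rule for a Tchebyshev system of `2n` continuous functions. -/
theorem generalised_gauss_lobatto_quadrature_unique
    (n : ℕ) (hn : 1 ≤ n) (a b : ℝ) (hab : a < b)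
    (g : Fin (2 * n) → ℝ → ℝ)
    (hg : ∀ j, ContinuousOn (g j) (Set.Icc a b))
    (hT : IsTchebyshevSystem a b g)
    (ω : ℝ → ℝ) (hω : ContinuousOn ω (Set.Icc a b))
    (hωpos : ∀ x ∈ Set.Icc a b, 0 < ω x)
    (x w : Fin (n + 1) → ℝ) (hx : StrictMono x)
    (hxa : x 0 = a) (hxb : x (Fin.last n) = b)
    (hw : ∀ k, 0 < w k)
    (hexx : ∀ j, ∫ t in a..b, g j t * ω t = ∑ k, w k * g j (x k))
    (y v : Fin (n + 1) → ℝ) (hy : StrictMono y)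
    (hya : y 0 = a) (hyb : y (Fin.last n) = b)
    (hv : ∀ k, 0 < v k)
    (hexy : ∀ j, ∫ t in a..b, g j t * ω t = ∑ k, v k * g j (y k)) :
    x = y ∧ w = v := by
  classical
  have hxmem : ∀ k, x k ∈ Set.Icc a b := fun k =>
    ⟨hxa ▸ hx.monotone (Fin.zero_le k), hxb ▸ hx.monotone (Fin.le_last k)⟩
  have hymem : ∀ k, y k ∈ Set.Icc a b := fun k =>
    ⟨hya ▸ hy.monotone (Fin.zero_le k), hyb ▸ hy.monotone (Fin.le_last k)⟩
  set X : Finset ℝ := Finset.image x Finset.univ with hX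
  set Y : Finset ℝ := Finset.image y Finset.univ with hY
  set T : Finset ℝ := X ∪ Y with hTdef
  have hTsub : ↑T ⊆ Set.Icc a b := by
    intro c hc
    simp only [hTdef, hX, hY, Finset.coe_union, Set.mem_union, Finset.coe_image,
      Set.mem_image] at hc
    rcases hc with ⟨k, _, rfl⟩ | ⟨k, _, rfl⟩
    · exact hxmem k
    · exact hymem k
  have hcardX : X.card = n + 1 := by
    rw [hX, Finset.card_image_of_injective _ hx.injective, Finset.card_univ, Fintype.card_fin]
  have hcardY : Y.card = n + 1 := by
    rw [hY, Finset.card_image_of_injective _ hy.injective, Finset.card_univ, Fintype.card_fin]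
  have hinter : 2 ≤ (X ∩ Y).card := by
    have hsub : ({a, b} : Finset ℝ) ⊆ X ∩ Y := by
      intro c hc
      simp only [Finset.mem_insert, Finset.mem_singleton] at hc
      rcases hc with rfl | rfl
      · exact Finset.mem_inter.mpr ⟨Finset.mem_image.mpr ⟨0, Finset.mem_univ _, hxa⟩,
          Finset.mem_image.mpr ⟨0, Finset.mem_univ _, hya⟩⟩
      · exact Finset.mem_inter.mpr
          ⟨Finset.mem_image.mpr ⟨Fin.last n, Finset.mem_univ _, hxb⟩,
           Finset.mem_image.mpr ⟨Fin.last n, Finset.mem_univ _, hyb⟩⟩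
    have h2 : ({a, b} : Finset ℝ).card = 2 := by
      rw [Finset.card_insert_of_notMem (by simpa using hab.ne), Finset.card_singleton]
    calc 2 = ({a, b} : Finset ℝ).card := h2.symm
      _ ≤ (X ∩ Y).card := Finset.card_le_card hsub
  have hTcard : T.card ≤ 2 * n := by
    have := Finset.card_union_add_card_inter X Y
    rw [hcardX, hcardY, ← hTdef] at this
    omega
  -- extend T to a set U of exactly 2n points inside [a,b]
  have hInf : (Set.Icc a b \ ↑T).Infinite :=
    (Set.Icc_infinite hab).diff T.finite_toSet
  obtain ⟨T', hT'sub, hT'card⟩ := hInf.exists_subset_card_eq (2 * n - T.card)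
  set U : Finset ℝ := T ∪ T' with hUdef
  have hdisj : Disjoint T T' := by
    rw [Finset.disjoint_right]
    intro c hc
    exact fun hcT => (hT'sub hc).2 hcT
  have hUcard : U.card = 2 * n := by
    rw [hUdef, Finset.card_union_of_disjoint hdisj, hT'card]
    omega
  have hUsub : ↑U ⊆ Set.Icc a b := by
    intro c hc
    simp only [hUdef, Finset.coe_union, Set.mem_union] at hc
    rcases hc with hc | hc
    · exact hTsub hc
    · exact (hT'sub hc).1
  set z : Fin (2 * n) → ℝ := ⇑(U.orderEmbOfFin hUcard) with hzdef
  have hz : StrictMono z := (U.orderEmbOfFin hUcard).strictMono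
  have hzmem : ∀ i, z i ∈ Set.Icc a b := fun i => hUsub (U.orderEmbOfFin_mem hUcard i)
  have hzdet : (Matrix.of fun i j => g j (z i)).det ≠ 0 := hT z hz hzmem
  have hzrange : ∀ c ∈ T, ∃ i, z i = c := by
    intro c hc
    have : c ∈ Set.range z := by
      rw [hzdef, Finset.range_orderEmbOfFin]
      exact Finset.mem_union_left _ hc
    exact this
  -- the coefficient vectors
  set A : Fin (2 * n) → ℝ := fun i => ∑ k, if x k = z i then w k else 0 with hA
  set B : Fin (2 * n) → ℝ := fun i => ∑ k, if y k = z i then v k else 0 with hB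
  -- key rearrangement
  have key : ∀ (p q : Fin (n + 1) → ℝ), Function.Injective p → (∀ k, p k ∈ T) →
      ∀ f : ℝ → ℝ,
      ∑ i, (∑ k, if p k = z i then q k else 0) * f (z i) = ∑ k, q k * f (p k) := by
    intro p q hp hpmem f
    have : ∀ i, (∑ k, if p k = z i then q k else 0) * f (z i)
        = ∑ k, if p k = z i then q k * f (z i) else 0 := by
      intro i
      rw [Finset.sum_mul]
      refine Finset.sum_congr rfl fun k _ => ?_
      split <;> simp
    simp only [this]
    rw [Finset.sum_comm]
    refine Finset.sum_congr rfl fun k _ => ?_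
    obtain ⟨i0, hi0⟩ := hzrange (p k) (hpmem k)
    rw [Finset.sum_eq_single i0]
    · rw [hi0, if_pos rfl]
    · intro i _ hi
      rw [if_neg]
      intro hne
      exact hi (hz.injective (by rw [← hne, hi0]))
    · intro h; exact absurd (Finset.mem_univ i0) h
  have hxT : ∀ k, x k ∈ T := fun k =>
    Finset.mem_union_left _ (Finset.mem_image.mpr ⟨k, Finset.mem_univ _, rfl⟩)
  have hyT : ∀ k, y k ∈ T := fun k =>
    Finset.mem_union_right _ (Finset.mem_image.mpr ⟨k, Finset.mem_univ _, rfl⟩)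
  -- A - B annihilates all g j
  have hann : ∀ j, ∑ i, (A i - B i) * g j (z i) = 0 := by
    intro j
    have h1 : ∑ i, A i * g j (z i) = ∑ k, w k * g j (x k) :=
      key x w hx.injective hxT (g j)
    have h2 : ∑ i, B i * g j (z i) = ∑ k, v k * g j (y k) :=
      key y v hy.injective hyT (g j)
    have h3 : ∑ k, w k * g j (x k) = ∑ k, v k * g j (y k) := by
      rw [← hexx j, hexy j]
    simp only [sub_mul, Finset.sum_sub_distrib, h1, h2, h3, sub_self]
  -- conclude A = B using the nonsingular matrix
  have hAB : ∀ i, A i = B i := by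
    set M : Matrix (Fin (2 * n)) (Fin (2 * n)) ℝ := Matrix.of fun j i => g j (z i) with hM
    have hMdet : M.det ≠ 0 := by
      have : M = (Matrix.of fun i j => g j (z i)).transpose := rfl
      rw [this, Matrix.det_transpose]
      exact hzdet
    have hmv : M.mulVec (fun i => A i - B i) = 0 := by
      funext j
      have : M.mulVec (fun i => A i - B i) j = ∑ i, (A i - B i) * g j (z i) := by
        simp only [Matrix.mulVec, dotProduct, hM, Matrix.of_apply]
        exact Finset.sum_congr rfl fun i _ => mul_comm _ _
      rw [this, hann j]
      rfl
    have := Matrix.eq_zero_of_mulVec_eq_zero hMdet hmv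
    intro i
    have hi := congrFun this i
    exact sub_eq_zero.mp hi
  -- for each k, find a matching node of the other rule
  have hmain : ∀ k, ∃ l, y l = x k ∧ v l = w k := by
    intro k
    obtain ⟨i, hi⟩ := hzrange (x k) (hxT k)
    have hAi : A i = w k := by
      simp only [hA]
      rw [Finset.sum_eq_single k]
      · rw [hi, if_pos rfl]
      · intro k' _ hk'
        rw [if_neg]
        intro hne
        exact hk' (hx.injective (by rw [hne, hi]))
      · intro h; exact absurd (Finset.mem_univ k) h
    have hBi : B i = w k := by rw [← hAB i, hAi]
    have hex : ∃ l, y l = z i := by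
      by_contra hne
      push_neg at hne
      have : B i = 0 := by
        rw [hB]
        exact Finset.sum_eq_zero fun l _ => if_neg (hne l)
      rw [this] at hBi
      exact (hw k).ne' hBi.symm
    obtain ⟨l, hl⟩ := hex
    refine ⟨l, by rw [hl, hi], ?_⟩
    have : B i = v l := by
      simp only [hB]
      rw [Finset.sum_eq_single l]
      · rw [hl, if_pos rfl]
      · intro l' _ hl'
        rw [if_neg]
        intro hne
        exact hl' (hy.injective (by rw [hne, hl]))
      · intro h; exact absurd (Finset.mem_univ l) h
    rw [← this, hBi]
  choose σ hσ1 hσ2 using hmain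
  have hσmono : StrictMono σ := by
    intro k k' hkk'
    rw [← hy.lt_iff_lt, hσ1, hσ1]
    exact hx hkk'
  have hσid : σ = id := strictMono_fin_id hσmono
  constructor
  · funext k
    have := hσ1 k
    rw [hσid] at this
    exact this.symm
  · funext k
    have := hσ2 k
    rw [hσid] at this
    exact this.symm
end

section
/- Let n ≥ 1, let a < b, let g_1, …, g_{2n} be continuous real-valued functions forming a Tchebyshev system on [a,b], and let ω be a continuous, strictly positive weight function on [a,b]. Then no positive quadrature rule on [a,b] with fewer than n nodes is exact for all of g_1, …, g_{2n} with respect to ω; that is, if a ≤ x_1 < … < x_m ≤ b, all w_k > 0, and ∫_a^b g_j(x)ω(x) dx = Σ_{k=1}^m w_k g_j(x_k) for every j = 1, …, 2n, then m ≥ n. -/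
open MeasureTheory

lemma aux_integral_pos {a b : ℝ} (hab : a < b) {f : ℝ → ℝ}
    (hc : ContinuousOn f (Set.Icc a b)) (h0 : ∀ t ∈ Set.Icc a b, 0 ≤ f t)
    {t₁ : ℝ} (ht₁ : t₁ ∈ Set.Icc a b) (hft₁ : 0 < f t₁) :
    0 < ∫ t in a..b, f t := by
  -- find δ
  have hcw : ContinuousWithinAt f (Set.Icc a b) t₁ := hc t₁ ht₁
  rw [Metric.continuousWithinAt_iff] at hcw
  obtain ⟨δ, hδ, hδ2⟩ := hcw (f t₁ / 2) (by linarith)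
  set α := max a (t₁ - δ/2) with hα
  set β := min b (t₁ + δ/2) with hβ
  obtain ⟨ht₁a, ht₁b⟩ := ht₁
  have hαβ : α < β := by
    apply max_lt <;> apply lt_min <;> linarith
  have hsub : Set.Icc α β ⊆ Set.Icc a b := by
    apply Set.Icc_subset_Icc (le_max_left _ _) (min_le_left _ _)
  have hlow : ∀ t ∈ Set.Icc α β, f t₁ / 2 ≤ f t := by
    intro t ht
    obtain ⟨h1, h2⟩ := ht
    have hd : dist t t₁ < δ := by
      rw [Real.dist_eq, abs_lt]
      constructor
      · have := le_trans (le_max_right a (t₁ - δ/2)) h1; linarith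
      · have := le_trans h2 (min_le_right b (t₁ + δ/2)); linarith
    have := hδ2 (hsub ⟨h1, h2⟩) hd
    rw [Real.dist_eq, abs_lt] at this
    linarith
  have hint : ∀ u v : ℝ, u ≤ v → Set.Icc u v ⊆ Set.Icc a b → IntervalIntegrable f volume u v := by
    intro u v huv hs
    apply ContinuousOn.intervalIntegrable
    rw [Set.uIcc_of_le huv]
    exact hc.mono hs
  have hab' : a ≤ b := le_of_lt hab
  have haα : a ≤ α := le_max_left _ _
  have hβb : β ≤ b := min_le_left _ _
  have hαβ' : α ≤ β := le_of_lt hαβ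
  have i1 : IntervalIntegrable f volume a α := hint a α haα (Set.Icc_subset_Icc le_rfl (le_trans hαβ' hβb))
  have i2 : IntervalIntegrable f volume α β := hint α β hαβ' hsub
  have i3 : IntervalIntegrable f volume β b := hint β b hβb (Set.Icc_subset_Icc (le_trans haα hαβ') le_rfl)
  have hsplit : ∫ t in a..b, f t = (∫ t in a..α, f t) + ((∫ t in α..β, f t) + (∫ t in β..b, f t)) := by
    rw [intervalIntegral.integral_add_adjacent_intervals i2 i3,
      intervalIntegral.integral_add_adjacent_intervals i1 (i2.trans i3)]
  have n1 : 0 ≤ ∫ t in a..α, f t := intervalIntegral.integral_nonneg haα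
    (fun u hu => h0 u (Set.Icc_subset_Icc le_rfl (le_trans hαβ' hβb) hu))
  have n3 : 0 ≤ ∫ t in β..b, f t := intervalIntegral.integral_nonneg hβb
    (fun u hu => h0 u (Set.Icc_subset_Icc (le_trans haα hαβ') le_rfl hu))
  have n2 : (β - α) * (f t₁ / 2) ≤ ∫ t in α..β, f t := by
    have := intervalIntegral.integral_mono_on hαβ'
      (intervalIntegrable_const (c := f t₁ / 2)) i2 hlow
    rwa [intervalIntegral.integral_const, smul_eq_mul] at this
  have : 0 < (β - α) * (f t₁ / 2) := by
    apply mul_pos (by linarith) (by linarith)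
  linarith

lemma aux_det_sign {M : ℕ} {a b : ℝ} {g : Fin M → ℝ → ℝ}
    (hg : ∀ j, ContinuousOn (g j) (Set.Icc a b))
    (hT : ∀ y : Fin M → ℝ, StrictMono y → (∀ i, y i ∈ Set.Icc a b) →
      (Matrix.of fun i j => g j (y i)).det ≠ 0)
    {y z : Fin M → ℝ} (hy : StrictMono y) (hym : ∀ i, y i ∈ Set.Icc a b)
    (hz : StrictMono z) (hzm : ∀ i, z i ∈ Set.Icc a b) :
    0 < (Matrix.of fun i j => g j (y i)).det * (Matrix.of fun i j => g j (z i)).det := by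
  set T : Set (Fin M → ℝ) := {u | StrictMono u ∧ ∀ i, u i ∈ Set.Icc a b} with hT'
  set F : (Fin M → ℝ) → ℝ := fun u => (Matrix.of fun i j => g j (u i)).det with hF
  have hconv : Convex ℝ T := by
    intro u hu v hv s t hs ht hst
    obtain ⟨hu1, hu2⟩ := hu
    obtain ⟨hv1, hv2⟩ := hv
    constructor
    · intro i i' hii'
      simp only [Pi.add_apply, Pi.smul_apply, smul_eq_mul]
      rcases eq_or_lt_of_le hs with hs0 | hs0
      · have ht0 : t = 1 := by linarith
        subst ht0
        rw [← hs0]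
        simpa using hv1 hii'
      · have k1 : s * u i < s * u i' := mul_lt_mul_of_pos_left (hu1 hii') hs0
        have k2 : t * v i ≤ t * v i' := mul_le_mul_of_nonneg_left (le_of_lt (hv1 hii')) ht
        linarith
    · intro i
      have h1 := hu2 i
      have h2 := hv2 i
      simp only [Set.mem_Icc] at h1 h2 ⊢
      simp only [Pi.add_apply, Pi.smul_apply, smul_eq_mul]
      have k1 : s * a ≤ s * u i := mul_le_mul_of_nonneg_left h1.1 hs
      have k2 : t * a ≤ t * v i := mul_le_mul_of_nonneg_left h2.1 ht
      have k3 : s * u i ≤ s * b := mul_le_mul_of_nonneg_left h1.2 hs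
      have k4 : t * v i ≤ t * b := mul_le_mul_of_nonneg_left h2.2 ht
      have k0 : s * a + t * a = a := by linear_combination a * hst
      have k5 : s * b + t * b = b := by linear_combination b * hst
      constructor <;> linarith
  have hcont : ContinuousOn F T := by
    apply Continuous.comp_continuousOn (Continuous.matrix_det continuous_id)
    apply continuousOn_pi.2
    intro i
    apply continuousOn_pi.2
    intro j
    exact (hg j).comp ((continuous_apply i).continuousOn) (fun u hu => hu.2 i)
  have hprec : IsPreconnected T := hconv.isPreconnected
  have hymem : y ∈ T := ⟨hy, hym⟩
  have hzmem : z ∈ T := ⟨hz, hzm⟩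
  have hFy : F y ≠ 0 := hT y hy hym
  have hFz : F z ≠ 0 := hT z hz hzm
  by_contra hcon
  push_neg at hcon
  have hprod : F y * F z < 0 := lt_of_le_of_ne hcon (mul_ne_zero hFy hFz)
  have : (0:ℝ) ∈ F '' T := by
    rcases mul_neg_iff.1 hprod with ⟨h1, h2⟩ | ⟨h1, h2⟩
    · exact hprec.intermediate_value hzmem hymem hcont ⟨le_of_lt h2, le_of_lt h1⟩
    · exact hprec.intermediate_value hymem hzmem hcont ⟨le_of_lt h1, le_of_lt h2⟩
  obtain ⟨u, hu, hu0⟩ := this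
  exact hT u hu.1 hu.2 hu0

set_option maxHeartbeats 1600000 in

lemma aux_insert_det {N : ℕ} (g : Fin (N+1) → ℝ → ℝ) (y : Fin N → ℝ) (hy : StrictMono y)
    (t : ℝ) (k : ℕ) (hk : k ≤ N)
    (hbelow : ∀ i : Fin N, (i:ℕ) < k → y i < t) (habove : ∀ i : Fin N, k ≤ (i:ℕ) → t < y i) :
    ∃ z : Fin (N+1) → ℝ, StrictMono z ∧ (∀ p, z p = t ∨ ∃ i, z p = y i) ∧
      (Matrix.of fun (i : Fin (N+1)) j => g j (if h : (i:ℕ) < N then y ⟨i,h⟩ else t)).det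
        = (-1:ℝ)^(N - k) * (Matrix.of fun i j => g j (z i)).det := by
  classical
  set j' : Fin (N+1) := ⟨N - k, by omega⟩ with hj'
  set ρ : Equiv.Perm (Fin (N+1)) :=
    Fin.revPerm.trans ((Fin.cycleRange j').symm.trans Fin.revPerm) with hρ
  set v : Fin (N+1) → ℝ := fun i => if h : (i:ℕ) < N then y ⟨i,h⟩ else t with hv
  set z : Fin (N+1) → ℝ := v ∘ ρ.symm with hz
  have hρsymm : ∀ p : Fin (N+1), ρ.symm p = Fin.rev (Fin.cycleRange j' (Fin.rev p)) := by
    intro p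
    simp [hρ, Equiv.symm_trans_apply]
  have hρv : ∀ p : Fin (N+1), ((ρ.symm p : ℕ))
      = if (p:ℕ) < k then (p:ℕ) else if (p:ℕ) = k then N else (p:ℕ) - 1 := by
    intro p
    have hpN : (p:ℕ) ≤ N := by omega
    rw [hρsymm]
    rcases lt_trichotomy ((p:ℕ)) k with hc | hc | hc
    · have h1 : j' < Fin.rev p := by
        rw [Fin.lt_def, Fin.val_rev]
        show N - k < N + 1 - ((p:ℕ) + 1)
        omega
      rw [Fin.cycleRange_of_gt h1, Fin.rev_rev]
      rw [if_pos hc]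
    · have h1 : Fin.rev p = j' := by
        apply Fin.ext
        rw [Fin.val_rev]
        show N + 1 - ((p:ℕ) + 1) = N - k
        omega
      rw [h1, Fin.cycleRange_self]
      have h2 : ((Fin.rev (0 : Fin (N+1))) : ℕ) = N := by
        rw [Fin.val_rev]
        simp only [Fin.val_zero]
        omega
      rw [h2, if_neg (by omega), if_pos hc]
    · have h1 : Fin.rev p < j' := by
        rw [Fin.lt_def, Fin.val_rev]
        show N + 1 - ((p:ℕ) + 1) < N - k
        omega
      have h2 : ((Fin.cycleRange j' (Fin.rev p)) : ℕ) = (Fin.rev p : ℕ) + 1 :=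
        Fin.coe_cycleRange_of_lt h1
      have h4 : ((Fin.rev (Fin.cycleRange j' (Fin.rev p))) : ℕ) = (p:ℕ) - 1 := by
        rw [Fin.val_rev, h2, Fin.val_rev]
        omega
      rw [h4, if_neg (by omega), if_neg (by omega)]
  have hzval : ∀ p : Fin (N+1), z p
      = if h : (p:ℕ) < k then y ⟨p, by omega⟩
        else if _h2 : (p:ℕ) = k then t else y ⟨(p:ℕ) - 1, by have := p.isLt; omega⟩ := by
    intro p
    have hval := hρv p
    have hz1 : z p = v (ρ.symm p) := rfl
    rw [hz1, hv]
    simp only []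
    rcases lt_trichotomy ((p:ℕ)) k with hc | hc | hc
    · rw [if_pos hc] at hval
      rw [dif_pos (show ((ρ.symm p : ℕ)) < N by omega), dif_pos hc]
      congr 1
      exact Fin.ext hval
    · have hc' : ¬ ((p:ℕ) < k) := by omega
      rw [if_neg hc', if_pos hc] at hval
      rw [dif_neg (by omega), dif_neg hc', dif_pos hc]
    · have hc' : ¬ ((p:ℕ) < k) := by omega
      have hc'' : (p:ℕ) ≠ k := by omega
      rw [if_neg hc', if_neg hc''] at hval
      have hpN : (p:ℕ) ≤ N := by omega
      rw [dif_pos (show ((ρ.symm p : ℕ)) < N by omega), dif_neg hc', dif_neg hc'']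
      congr 1
      exact Fin.ext hval
  have hzmono : StrictMono z := by
    intro p p' hpp'
    have hpN : (p:ℕ) ≤ N := by omega
    have hp'N : (p':ℕ) ≤ N := by omega
    have hlt : (p:ℕ) < (p':ℕ) := hpp'
    rw [hzval p, hzval p']
    rcases lt_trichotomy ((p:ℕ)) k with hc | hc | hc <;>
      rcases lt_trichotomy ((p':ℕ)) k with hc' | hc' | hc'
    · rw [dif_pos hc, dif_pos hc']
      exact hy (Fin.mk_lt_mk.2 (by omega))
    · rw [dif_pos hc, dif_neg (by omega), dif_pos hc']
      exact hbelow _ hc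
    · rw [dif_pos hc, dif_neg (by omega), dif_neg (by omega)]
      calc y ⟨p, by omega⟩ < t := hbelow _ hc
        _ < y ⟨(p':ℕ)-1, by omega⟩ := habove ⟨(p':ℕ)-1, by omega⟩ (by
            show k ≤ (p':ℕ) - 1
            omega)
    · omega
    · omega
    · rw [dif_neg (by omega), dif_pos hc, dif_neg (by omega), dif_neg (by omega)]
      exact habove ⟨(p':ℕ)-1, by omega⟩ (by show k ≤ (p':ℕ) - 1; omega)
    · omega
    · omega
    · rw [dif_neg (by omega), dif_neg (by omega), dif_neg (by omega), dif_neg (by omega)]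
      exact hy (Fin.mk_lt_mk.2 (by omega))
  have hzrange : ∀ p, z p = t ∨ ∃ i, z p = y i := by
    intro p
    rw [hzval p]
    split_ifs with h1 h2
    · right; exact ⟨_, rfl⟩
    · left; rfl
    · right; exact ⟨_, rfl⟩
  refine ⟨z, hzmono, hzrange, ?_⟩
  have hmat : (Matrix.of fun i j => g j (v i))
      = (Matrix.of fun i j => g j (z i)).submatrix ρ id := by
    ext i j
    simp [Matrix.submatrix_apply, hz, Equiv.symm_apply_apply]
  have hρmul : ρ = Fin.revPerm * (Fin.cycleRange j')⁻¹ * Fin.revPerm := by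
    ext p
    simp [hρ, Equiv.symm_trans_apply, Equiv.Perm.mul_apply, Equiv.Perm.inv_def]
  have hsign : Equiv.Perm.sign ρ = (-1 : ℤˣ)^(N - k) := by
    rw [hρmul, map_mul, map_mul, map_inv, Fin.sign_cycleRange]
    have h5 : (j' : ℕ) = N - k := rfl
    rw [h5]
    have h6 : Equiv.Perm.sign (Fin.revPerm : Equiv.Perm (Fin (N+1)))
        * Equiv.Perm.sign (Fin.revPerm : Equiv.Perm (Fin (N+1))) = 1 :=
      Int.units_mul_self _
    calc Equiv.Perm.sign Fin.revPerm * ((-1:ℤˣ) ^ (N-k))⁻¹ * Equiv.Perm.sign Fin.revPerm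
        = Equiv.Perm.sign Fin.revPerm * Equiv.Perm.sign Fin.revPerm * ((-1:ℤˣ) ^ (N-k))⁻¹ :=
          mul_right_comm _ _ _
      _ = ((-1:ℤˣ) ^ (N-k))⁻¹ := by rw [h6, one_mul]
      _ = (-1:ℤˣ) ^ (N-k) := by rw [← inv_pow, Int.units_inv_eq_self]
  show (Matrix.of fun i j => g j (v i)).det = _
  rw [hmat, Matrix.det_permute, hsign]
  push_cast
  ring

lemma aux_equally_spaced {a b : ℝ} (hab : a < b) (K : ℕ) :
    ∃ e : Fin K → ℝ, StrictMono e ∧ ∀ i, e i ∈ Set.Icc a b := by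
  have hba : 0 < b - a := by linarith
  set d := (b - a) / (K + 1) with hd
  have hd0 : 0 < d := by positivity
  have hsum : (K + 1 : ℝ) * d = b - a := by
    rw [hd]; field_simp
  refine ⟨fun i => a + ((i:ℕ) + 1) * d, ?_, ?_⟩
  · intro i i' h
    have h1 : ((i:ℕ) : ℝ) + 1 < ((i':ℕ) : ℝ) + 1 := by
      have : (i:ℕ) < (i':ℕ) := h
      exact_mod_cast Nat.add_lt_add_right this 1
    have := mul_lt_mul_of_pos_right h1 hd0
    simp only []
    linarith
  · intro i
    simp only []
    constructor
    · nlinarith [mul_pos (show (0:ℝ) < (i:ℕ) + 1 by positivity) hd0]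
    · have h1 : ((i:ℕ) : ℝ) + 1 ≤ (K:ℝ) + 1 := by
        have : (i:ℕ) < K := i.isLt
        have : ((i:ℕ):ℝ) < K := by exact_mod_cast this
        linarith
      have := mul_le_mul_of_nonneg_right h1 (le_of_lt hd0)
      linarith [hsum]

lemma aux_downclosed {K : ℕ} {q : Fin K → ℝ} (hq : StrictMono q) (t : ℝ) :
    ∀ l : Fin K, ((l:ℕ) < (Finset.univ.filter (fun l' => q l' < t)).card → q l < t)
      ∧ ((Finset.univ.filter (fun l' => q l' < t)).card ≤ (l:ℕ) → ¬ (q l < t)) := by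
  classical
  set S := Finset.univ.filter (fun l' => q l' < t) with hS
  intro l
  constructor
  · intro hl
    by_contra hql
    have hsub : S ⊆ Finset.Iio l := by
      intro s hs
      rw [Finset.mem_Iio]
      rw [hS, Finset.mem_filter] at hs
      by_contra hsl
      exact hql (lt_of_le_of_lt (hq.monotone (not_lt.1 hsl)) hs.2)
    have := Finset.card_le_card hsub
    rw [Fin.card_Iio] at this
    omega
  · intro hl hql
    have hsub : Finset.Iic l ⊆ S := by
      intro s hs
      rw [Finset.mem_Iic] at hs
      rw [hS, Finset.mem_filter]
      exact ⟨Finset.mem_univ _, lt_of_le_of_lt (hq.monotone hs) hql⟩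
    have := Finset.card_le_card hsub
    rw [Fin.card_Iic] at this
    omega

lemma aux_expand {M : ℕ} (B : Matrix (Fin M) (Fin M) ℝ) (r : Fin M) (v : Fin M → ℝ) :
    (B.updateRow r v).det = ∑ j, v j * (B.updateRow r (Pi.single j 1)).det := by
  classical
  let φ : (Fin M → ℝ) →ₗ[ℝ] ℝ :=
    { toFun := fun u => (B.updateRow r u).det
      map_add' := fun u u' => Matrix.det_updateRow_add B r u u'
      map_smul' := fun s u => Matrix.det_updateRow_smul B r s u }
  have h1 : v = ∑ j, Pi.single j (v j) := (Finset.univ_sum_single v).symm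
  have h2 : φ v = ∑ j, v j * φ (Pi.single j 1) := by
    conv_lhs => rw [h1]
    rw [map_sum]
    apply Finset.sum_congr rfl
    intro j _
    have h3 : (Pi.single j (v j) : Fin M → ℝ) = v j • (Pi.single j 1 : Fin M → ℝ) := by
      funext i
      by_cases h : i = j
      · subst h; simp
      · simp [Pi.single_apply, h]
    rw [h3, _root_.map_smul]
    rfl
  exact h2

set_option maxHeartbeats 1600000 in
lemma aux_per_eps {n' : ℕ} {a b : ℝ} (hab : a < b)
    (g : Fin (2*n'+1+1) → ℝ → ℝ)
    (hg : ∀ j, ContinuousOn (g j) (Set.Icc a b))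
    (hT : ∀ y : Fin (2*n'+1+1) → ℝ, StrictMono y → (∀ i, y i ∈ Set.Icc a b) →
      (Matrix.of fun i j => g j (y i)).det ≠ 0)
    (q : Fin n' → ℝ) (hq : StrictMono q) (hqm : ∀ l, q l ∈ Set.Ioc a b)
    (ε : ℝ) (hε : 0 < ε) (hε2 : ∀ l, a < q l - ε)
    (hε3 : ∀ l l' : Fin n', l < l' → q l < q l' - ε) :
    ∃ c : Fin (2*n'+1+1) → ℝ, ‖c‖ = 1 ∧
      (∀ s ∈ Set.Icc a b, (∀ l, s < q l - ε ∨ q l ≤ s) → 0 ≤ ∑ j, c j * g j s) ∧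
      (∀ l, ∑ j, c j * g j (q l) = 0) ∧ (∑ j, c j * g j a = 0) := by
  classical
  set q' : ℕ → ℝ := fun l => if h : l < n' then q ⟨l,h⟩ else 0 with hq'
  have hq'v : ∀ (l:ℕ) (h : l < n'), q' l = q ⟨l,h⟩ := by
    intro l h; simp [hq', h]
  have hq'2 : ∀ l : ℕ, l < n' → a < q' l - ε := by
    intro l h; rw [hq'v l h]; exact hε2 _
  have hq'b : ∀ l : ℕ, l < n' → q' l ≤ b := by
    intro l h; rw [hq'v l h]; exact (hqm _).2
  have hq'3 : ∀ l l' : ℕ, l < n' → l' < n' → l < l' → q' l < q' l' - ε := by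
    intro l l' h h' hll'
    rw [hq'v l h, hq'v l' h']
    exact hε3 _ _ (by simpa [Fin.lt_def] using hll')
  set y : Fin (2*n'+1) → ℝ := fun i =>
    if (i:ℕ) = 0 then a else if (i:ℕ) % 2 = 1 then q' ((i:ℕ)/2) - ε
      else q' ((i:ℕ)/2 - 1) with hy
  have hyval : ∀ i : Fin (2*n'+1), y i = if (i:ℕ) = 0 then a
      else if (i:ℕ) % 2 = 1 then q' ((i:ℕ)/2) - ε else q' ((i:ℕ)/2 - 1) := fun i => rfl
  have hymono : StrictMono y := by
    rw [Fin.strictMono_iff_lt_succ]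
    intro i
    have hiv : (i:ℕ) < 2*n' := i.isLt
    rw [hyval, hyval]
    simp only [Fin.coe_castSucc, Fin.val_succ]
    by_cases h0 : (i:ℕ) = 0
    · rw [if_pos h0, if_neg (by omega), if_pos (by omega)]
      have e2 : ((i:ℕ)+1)/2 = 0 := by omega
      rw [e2]
      linarith [hq'2 0 (by omega)]
    · by_cases h1 : (i:ℕ) % 2 = 1
      · rw [if_neg h0, if_pos h1, if_neg (by omega), if_neg (by omega)]
        have e3 : ((i:ℕ)+1)/2 - 1 = (i:ℕ)/2 := by omega
        rw [e3]
        linarith [hε]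
      · rw [if_neg h0, if_neg h1, if_neg (by omega), if_pos (by omega)]
        exact hq'3 ((i:ℕ)/2 - 1) (((i:ℕ)+1)/2) (by omega) (by omega) (by omega)
  have hymem : ∀ i, y i ∈ Set.Icc a b := by
    intro i
    have hiv : (i:ℕ) < 2*n'+1 := i.isLt
    rw [hyval]
    split_ifs with h0 h1
    · exact ⟨le_refl a, le_of_lt hab⟩
    · have hv : (i:ℕ)/2 < n' := by omega
      constructor
      · linarith [hq'2 _ hv]
      · linarith [hq'b _ hv, hε]
    · have hv : (i:ℕ)/2 - 1 < n' := by omega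
      constructor
      · linarith [hq'2 _ hv, hε]
      · exact hq'b _ hv
  have hy0 : ∀ i : Fin (2*n'+1), (i:ℕ) = 0 → y i = a := by
    intro i hi
    rw [hyval, if_pos hi]
  have hyq : ∀ (i : Fin (2*n'+1)) (l : Fin n'), (i:ℕ) = 2*(l:ℕ)+2 → y i = q l := by
    intro i l hi
    have hl := l.isLt
    rw [hyval, if_neg (by omega), if_neg (by omega)]
    have e1 : (i:ℕ)/2 - 1 = (l:ℕ) := by omega
    rw [e1, hq'v _ l.isLt]
  set last : Fin (2*n'+1+1) := ⟨2*n'+1, by omega⟩ with hlast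
  set B : Matrix (Fin (2*n'+1+1)) (Fin (2*n'+1+1)) ℝ :=
    Matrix.of (fun i j => g j (if h : (i:ℕ) < 2*n'+1 then y ⟨i,h⟩ else a)) with hB
  set D : ℝ → ℝ := fun t => (B.updateRow last (fun j => g j t)).det with hD
  have hBD : ∀ t, D t =
      (Matrix.of fun (i : Fin (2*n'+1+1)) j =>
        g j (if h : (i:ℕ) < 2*n'+1 then y ⟨i,h⟩ else t)).det := by
    intro t
    have hrow : B.updateRow last (fun j => g j t)
        = Matrix.of (fun (i : Fin (2*n'+1+1)) j =>
            g j (if h : (i:ℕ) < 2*n'+1 then y ⟨i,h⟩ else t)) := by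
      funext i j
      rw [Matrix.updateRow_apply]
      by_cases hi : i = last
      · rw [if_pos hi]
        have hni : ¬ ((i:ℕ) < 2*n'+1) := by rw [hi]; simp [hlast]
        simp only [Matrix.of_apply]
        rw [dif_neg hni]
      · rw [if_neg hi]
        have hiN : (i:ℕ) < 2*n'+1 := by
          have h2 := i.isLt
          rcases Nat.lt_or_ge ((i:ℕ)) (2*n'+1) with h | h
          · exact h
          · exfalso
            apply hi
            apply Fin.ext
            simp only [hlast]
            omega
        simp only [Matrix.of_apply, hB]
        rw [dif_pos hiN, dif_pos hiN]
    show (B.updateRow last (fun j => g j t)).det = _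
    rw [hrow]
  set c₀ : Fin (2*n'+1+1) → ℝ := fun j => (B.updateRow last (Pi.single j 1)).det with hc₀
  have hDexp : ∀ t, D t = ∑ j, g j t * c₀ j := fun t => aux_expand B last (fun j => g j t)
  have hDy : ∀ i : Fin (2*n'+1), D (y i) = 0 := by
    intro i
    show (B.updateRow last (fun j => g j (y i))).det = 0
    apply Matrix.det_zero_of_row_eq (i := ⟨(i:ℕ), by have := i.isLt; omega⟩) (j := last)
    · intro h
      have h2 : (i:ℕ) = 2*n'+1 := by
        have := congrArg Fin.val h
        simpa [hlast] using this
      have := i.isLt; omega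
    · funext j
      rw [Matrix.updateRow_apply, Matrix.updateRow_apply]
      rw [if_neg (by
        intro h
        have h2 := congrArg Fin.val h
        simp only [hlast] at h2
        have := i.isLt
        omega), if_pos rfl]
      simp only [Matrix.of_apply, hB]
      rw [dif_pos i.isLt]
  obtain ⟨e, he, hem⟩ := aux_equally_spaced hab (2*n'+1+1)
  set s₀ : ℝ := (Matrix.of fun i j => g j (e i)).det with hs₀
  have hs₀0 : s₀ ≠ 0 := hT e he hem
  set z₁ : ℝ := if h : 0 < n' then q ⟨0,h⟩ - ε else b with hz₁
  have haz₁ : a < z₁ := by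
    rw [hz₁]; split_ifs with h
    · exact hε2 _
    · exact hab
  have hz₁b : z₁ ≤ b := by
    rw [hz₁]; split_ifs with h
    · linarith [(hqm ⟨0,h⟩).2, hε]
    · exact le_refl b
  set t₀ : ℝ := (a + z₁)/2 with ht₀
  have ht₀1 : a < t₀ := by rw [ht₀]; linarith
  have ht₀2 : t₀ < z₁ := by rw [ht₀]; linarith
  have ht₀m : t₀ ∈ Set.Icc a b := ⟨le_of_lt ht₀1, by linarith⟩
  have hDt₀ : D t₀ ≠ 0 := by
    obtain ⟨z, hzm, hzr, hzd⟩ := aux_insert_det g y hymono t₀ 1 (by omega)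
      (by
        intro i hi
        have h0 : (i:ℕ) = 0 := by omega
        rw [hy0 i h0]
        exact ht₀1)
      (by
        intro i hi
        have hn'pos : 0 < n' := by
          have := i.isLt
          by_contra h
          omega
        have h1 : y ⟨1, by omega⟩ ≤ y i := hymono.monotone (by
          show (1:ℕ) ≤ (i:ℕ)
          exact hi)
        have h2 : y ⟨1, by omega⟩ = q ⟨0, hn'pos⟩ - ε := by
          rw [hyval]
          rw [if_neg (by norm_num), if_pos (by norm_num)]
          norm_num
          rw [hq'v 0 hn'pos]
        have h3 : z₁ = q ⟨0, hn'pos⟩ - ε := by rw [hz₁, dif_pos hn'pos]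
        calc t₀ < z₁ := ht₀2
          _ = y ⟨1, by omega⟩ := by rw [h3, h2]
          _ ≤ y i := h1)
    rw [hBD, hzd]
    apply mul_ne_zero
    · apply pow_ne_zero; norm_num
    · apply hT z hzm
      intro p
      rcases hzr p with h | ⟨i, h⟩
      · rw [h]; exact ht₀m
      · rw [h]; exact hymem i
  have hc₀0 : c₀ ≠ 0 := by
    intro h
    apply hDt₀
    rw [hDexp, h]
    simp
  set v0 : Fin (2*n'+1+1) → ℝ := s₀ • c₀ with hv0
  have hv00 : v0 ≠ 0 := smul_ne_zero hs₀0 hc₀0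
  have hsum : ∀ t, ∑ j, (‖v0‖⁻¹ • v0) j * g j t = ‖v0‖⁻¹ * (s₀ * D t) := by
    intro t
    rw [hDexp, Finset.mul_sum, Finset.mul_sum]
    apply Finset.sum_congr rfl
    intro j _
    simp only [Pi.smul_apply, hv0, smul_eq_mul]
    ring
  refine ⟨‖v0‖⁻¹ • v0, norm_smul_inv_norm hv00, ?_, ?_, ?_⟩
  · -- nonnegativity
    intro s hs hdich
    rw [hsum]
    by_cases hrange : ∃ i, y i = s
    · obtain ⟨i, hi⟩ := hrange
      rw [← hi, hDy i, mul_zero, mul_zero]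
    · push_neg at hrange
      set L := (Finset.univ.filter (fun l' => q l' < s)).card with hL
      have hLn' : L ≤ n' := by
        rw [hL]
        calc (Finset.univ.filter (fun l' => q l' < s)).card
            ≤ Finset.univ.card := Finset.card_filter_le _ _
          _ = n' := by rw [Finset.card_univ, Fintype.card_fin]
      have hsa : a < s := by
        rcases lt_or_eq_of_le hs.1 with h | h
        · exact h
        · exfalso
          exact hrange ⟨0, by omega⟩ (by rw [hy0 ⟨0, by omega⟩ rfl, ← h])
      obtain ⟨z, hzm, hzr, hzd⟩ := aux_insert_det g y hymono s (2*L+1) (by omega)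
        (by
          intro i hi
          rw [hyval]
          by_cases h0 : (i:ℕ) = 0
          · rw [if_pos h0]; exact hsa
          · by_cases h1 : (i:ℕ) % 2 = 1
            · rw [if_neg h0, if_pos h1]
              have hv : (i:ℕ)/2 < n' := by have := i.isLt; omega
              have hlL : ((⟨(i:ℕ)/2, hv⟩ : Fin n') : ℕ) < L := by
                show (i:ℕ)/2 < L
                omega
              have := (aux_downclosed hq s ⟨(i:ℕ)/2, hv⟩).1 hlL
              rw [hq'v _ hv]
              linarith
            · rw [if_neg h0, if_neg h1]
              have hv : (i:ℕ)/2 - 1 < n' := by have := i.isLt; omega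
              have hlL : ((⟨(i:ℕ)/2 - 1, hv⟩ : Fin n') : ℕ) < L := by
                show (i:ℕ)/2 - 1 < L
                omega
              have := (aux_downclosed hq s ⟨(i:ℕ)/2 - 1, hv⟩).1 hlL
              rw [hq'v _ hv]
              linarith)
        (by
          intro i hi
          rw [hyval]
          have h0 : ¬ ((i:ℕ) = 0) := by omega
          by_cases h1 : (i:ℕ) % 2 = 1
          · rw [if_neg h0, if_pos h1]
            have hv : (i:ℕ)/2 < n' := by have := i.isLt; omega
            have hlL : L ≤ ((⟨(i:ℕ)/2, hv⟩ : Fin n') : ℕ) := by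
              show L ≤ (i:ℕ)/2
              omega
            have hges := (aux_downclosed hq s ⟨(i:ℕ)/2, hv⟩).2 hlL
            push_neg at hges
            have hne : s ≠ q ⟨(i:ℕ)/2, hv⟩ := by
              intro h
              refine hrange ⟨2*((i:ℕ)/2)+2, by have := i.isLt; omega⟩ ?_
              rw [hyq ⟨2*((i:ℕ)/2)+2, by have := i.isLt; omega⟩ ⟨(i:ℕ)/2, hv⟩ rfl]
              exact h.symm
            have hlt : s < q ⟨(i:ℕ)/2, hv⟩ := lt_of_le_of_ne hges hne
            rcases hdich ⟨(i:ℕ)/2, hv⟩ with h | h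
            · rw [hq'v _ hv]; exact h
            · exfalso; linarith
          · rw [if_neg h0, if_neg h1]
            have hv : (i:ℕ)/2 - 1 < n' := by have := i.isLt; omega
            have hlL : L ≤ ((⟨(i:ℕ)/2 - 1, hv⟩ : Fin n') : ℕ) := by
              show L ≤ (i:ℕ)/2 - 1
              omega
            have hges := (aux_downclosed hq s ⟨(i:ℕ)/2 - 1, hv⟩).2 hlL
            push_neg at hges
            have hne : s ≠ q ⟨(i:ℕ)/2 - 1, hv⟩ := by
              intro h
              refine hrange ⟨2*((i:ℕ)/2 - 1)+2, by have := i.isLt; omega⟩ ?_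
              rw [hyq ⟨2*((i:ℕ)/2 - 1)+2, by have := i.isLt; omega⟩ ⟨(i:ℕ)/2 - 1, hv⟩ rfl]
              exact h.symm
            have hlt : s < q ⟨(i:ℕ)/2 - 1, hv⟩ := lt_of_le_of_ne hges hne
            rw [hq'v _ hv]
            exact hlt)
      have heven : (-1:ℝ)^(2*n'+1 - (2*L+1)) = 1 := by
        apply Even.neg_one_pow
        exact ⟨n' - L, by omega⟩
      have hzmem : ∀ p, z p ∈ Set.Icc a b := by
        intro p
        rcases hzr p with h | ⟨i, h⟩
        · rw [h]; exact hs
        · rw [h]; exact hymem i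
      have hpos := aux_det_sign hg hT he hem hzm hzmem
      rw [hBD, hzd, heven, one_mul]
      have h1 : 0 ≤ ‖v0‖⁻¹ := by positivity
      exact mul_nonneg h1 (le_of_lt hpos)
  · intro l
    have hl := l.isLt
    have h2 : D (q l) = 0 := by
      rw [← hyq ⟨2*(l:ℕ)+2, by omega⟩ l rfl]
      exact hDy _
    rw [hsum, h2, mul_zero, mul_zero]
  · have h2 : D a = 0 := by
      rw [← hy0 ⟨0, by omega⟩ rfl]
      exact hDy _
    rw [hsum, h2, mul_zero, mul_zero]

set_option maxHeartbeats 1600000 in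
/-- No positive quadrature rule with fewer than `n` nodes can be exact for a
Tchebyshev system of `2n` continuous functions. -/
theorem generalised_gauss_quadrature_minimal
    (n : ℕ) (hn : 1 ≤ n) (a b : ℝ) (hab : a < b)
    (g : Fin (2 * n) → ℝ → ℝ)
    (hg : ∀ j, ContinuousOn (g j) (Set.Icc a b))
    (hT : IsTchebyshevSystem a b g)
    (ω : ℝ → ℝ) (hω : ContinuousOn ω (Set.Icc a b))
    (hωpos : ∀ x ∈ Set.Icc a b, 0 < ω x)
    (m : ℕ) (x w : Fin m → ℝ) (hx : StrictMono x)
    (hxmem : ∀ k, x k ∈ Set.Icc a b)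
    (hw : ∀ k, 0 < w k)
    (hex : ∀ j, ∫ t in a..b, g j t * ω t = ∑ k, w k * g j (x k)) :
    n ≤ m := by
  classical
  by_contra hmn
  push_neg at hmn
  obtain ⟨n', rfl⟩ : ∃ n', n = n' + 1 := ⟨n - 1, by omega⟩
  have hmn' : m ≤ n' := by omega
  -- reinterpret the data over `Fin (2*n'+1+1)`
  have hT' : ∀ y : Fin (2*n'+1+1) → ℝ, StrictMono y → (∀ i, y i ∈ Set.Icc a b) →
      (Matrix.of fun i j => g j (y i)).det ≠ 0 := fun y hy hym => hT y hy hym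
  -- build the auxiliary point set q
  set nodesF : Finset ℝ := (Finset.univ.image x).filter (fun v => a < v) with hnodesF
  have hcard1 : nodesF.card ≤ m := by
    calc nodesF.card ≤ (Finset.univ.image x).card := Finset.card_filter_le _ _
      _ ≤ (Finset.univ : Finset (Fin m)).card := Finset.card_image_le
      _ = m := by rw [Finset.card_univ, Fintype.card_fin]
  have hinf : (Set.Ioo a b \ ↑nodesF).Infinite :=
    (Set.Ioo_infinite hab).diff (nodesF.finite_toSet)
  obtain ⟨extra, hextra_sub, hextra_card⟩ :=
    hinf.exists_subset_card_eq (n' - nodesF.card)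
  have hdisj : Disjoint nodesF extra := by
    rw [Finset.disjoint_right]
    intro v hv
    have := hextra_sub hv
    exact fun hvn => this.2 hvn
  set T : Finset ℝ := nodesF ∪ extra with hTset
  have hTcard : T.card = n' := by
    rw [hTset, Finset.card_union_of_disjoint hdisj, hextra_card]
    omega
  set qe := T.orderIsoOfFin hTcard with hqe
  set q : Fin n' → ℝ := fun l => (qe l : ℝ) with hqdef
  have hq : StrictMono q := by
    intro l l' h
    exact qe.strictMono h
  have hTmem : ∀ v ∈ T, v ∈ Set.Ioc a b := by
    intro v hv
    rw [hTset, Finset.mem_union] at hv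
    rcases hv with hv | hv
    · rw [hnodesF, Finset.mem_filter] at hv
      obtain ⟨hv1, hv2⟩ := hv
      rw [Finset.mem_image] at hv1
      obtain ⟨k, _, rfl⟩ := hv1
      exact ⟨hv2, (hxmem k).2⟩
    · have := hextra_sub hv
      exact ⟨this.1.1, le_of_lt this.1.2⟩
  have hqm : ∀ l, q l ∈ Set.Ioc a b := fun l => hTmem _ (qe l).2
  have hcov : ∀ k, x k = a ∨ ∃ l, q l = x k := by
    intro k
    rcases eq_or_lt_of_le (hxmem k).1 with h | h
    · left; exact h.symm
    · right
      have hmem : x k ∈ T := by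
        rw [hTset, Finset.mem_union]
        left
        rw [hnodesF, Finset.mem_filter, Finset.mem_image]
        exact ⟨⟨k, Finset.mem_univ k, rfl⟩, h⟩
      refine ⟨qe.symm ⟨x k, hmem⟩, ?_⟩
      rw [hqdef]
      simp
  -- the gap bound ε₀
  set S : Finset ℝ := insert (b - a)
    ((Finset.univ.image (fun l : Fin n' => q l - a)) ∪
      (((Finset.univ : Finset (Fin n' × Fin n')).filter (fun p => p.1 < p.2)).image
        (fun p => q p.2 - q p.1))) with hS
  have hSne : S.Nonempty := ⟨b - a, Finset.mem_insert_self _ _⟩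
  set ε₀ : ℝ := S.min' hSne with hε₀
  have hSpos : ∀ v ∈ S, 0 < v := by
    intro v hv
    rw [hS, Finset.mem_insert, Finset.mem_union] at hv
    rcases hv with hv | hv
    · rw [hv]; linarith
    · rcases hv with hv | hv
      · rw [Finset.mem_image] at hv
        obtain ⟨l, _, rfl⟩ := hv
        have := (hqm l).1
        linarith
      · rw [Finset.mem_image] at hv
        obtain ⟨p, hp, rfl⟩ := hv
        rw [Finset.mem_filter] at hp
        have := hq hp.2
        linarith
  have hε₀pos : 0 < ε₀ := hSpos _ (S.min'_mem hSne)
  have hε₀le : ∀ v ∈ S, ε₀ ≤ v := fun v hv => S.min'_le v hv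
  have hε₀ab : ε₀ ≤ b - a := hε₀le _ (Finset.mem_insert_self _ _)
  have hε₀q : ∀ l : Fin n', ε₀ ≤ q l - a := by
    intro l
    apply hε₀le
    rw [hS, Finset.mem_insert, Finset.mem_union]
    right; left
    rw [Finset.mem_image]
    exact ⟨l, Finset.mem_univ _, rfl⟩
  have hε₀qq : ∀ l l' : Fin n', l < l' → ε₀ ≤ q l' - q l := by
    intro l l' h
    apply hε₀le
    rw [hS, Finset.mem_insert, Finset.mem_union]
    right; right
    rw [Finset.mem_image]
    exact ⟨(l, l'), by rw [Finset.mem_filter]; exact ⟨Finset.mem_univ _, h⟩, rfl⟩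
  -- the sequence of ε's
  set εs : ℕ → ℝ := fun ν => ε₀ / (ν + 2) with hεs
  have hεspos : ∀ ν, 0 < εs ν := by
    intro ν
    rw [hεs]
    apply div_pos hε₀pos
    positivity
  have hεslt : ∀ ν, εs ν < ε₀ := by
    intro ν
    rw [hεs]
    rw [div_lt_iff₀ (by positivity)]
    nlinarith [hε₀pos, (show (0:ℝ) ≤ (ν:ℝ) by positivity)]
  -- the sequence of coefficient vectors
  have hc : ∀ ν : ℕ, ∃ c : Fin (2*n'+1+1) → ℝ, ‖c‖ = 1 ∧
      (∀ s ∈ Set.Icc a b, (∀ l, s < q l - εs ν ∨ q l ≤ s) → 0 ≤ ∑ j, c j * g j s) ∧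
      (∀ l, ∑ j, c j * g j (q l) = 0) ∧ (∑ j, c j * g j a = 0) := by
    intro ν
    apply aux_per_eps hab g hg hT' q hq hqm (εs ν) (hεspos ν)
    · intro l
      have := hε₀q l
      have := hεslt ν
      linarith
    · intro l l' h
      have := hε₀qq l l' h
      have := hεslt ν
      linarith
  choose c hc1 hc2 hc3 hc4 using hc
  -- compactness
  have hcs : ∀ ν, c ν ∈ Metric.sphere (0 : Fin (2*n'+1+1) → ℝ) 1 := by
    intro ν
    rw [mem_sphere_zero_iff_norm]
    exact hc1 ν
  obtain ⟨u, hu_mem, φ, hφmono, hφtend⟩ := (isCompact_sphere _ _).tendsto_subseq hcs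
  have hu_norm : ‖u‖ = 1 := mem_sphere_zero_iff_norm.1 hu_mem
  -- pointwise convergence of the linear functionals
  have hconv : ∀ r : Fin (2*n'+1+1) → ℝ,
      Filter.Tendsto (fun i => ∑ j, c (φ i) j * r j) Filter.atTop
        (nhds (∑ j, u j * r j)) := by
    intro r
    apply tendsto_finset_sum
    intro j _
    apply Filter.Tendsto.mul _ tendsto_const_nhds
    exact ((continuous_apply j).tendsto u).comp hφtend
  -- nodes vanish
  have hnodes0 : ∀ ν k, ∑ j, c ν j * g j (x k) = 0 := by
    intro ν k
    rcases hcov k with h | ⟨l, h⟩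
    · rw [h]; exact hc4 ν
    · rw [← h]; exact hc3 ν l
  -- integrals vanish
  have hInt0 : ∀ ν, ∑ j, c ν j * (∫ t in a..b, g j t * ω t) = 0 := by
    intro ν
    have h1 : ∀ j : Fin (2*n'+1+1), c ν j * (∫ t in a..b, g j t * ω t)
        = ∑ k, w k * (c ν j * g j (x k)) := by
      intro j
      rw [hex j, Finset.mul_sum]
      apply Finset.sum_congr rfl
      intro k _
      ring
    rw [Finset.sum_congr rfl (fun j _ => h1 j), Finset.sum_comm]
    apply Finset.sum_eq_zero
    intro k _
    rw [← Finset.mul_sum, hnodes0 ν k, mul_zero]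
  have hu_int : ∑ j, u j * (∫ t in a..b, g j t * ω t) = 0 := by
    have h1 := hconv (fun j => ∫ t in a..b, g j t * ω t)
    have h2 : Filter.Tendsto (fun i => ∑ j, c (φ i) j * (∫ t in a..b, g j t * ω t))
        Filter.atTop (nhds 0) := by
      have : (fun i => ∑ j, c (φ i) j * (∫ t in a..b, g j t * ω t)) = fun _ => (0:ℝ) := by
        funext i
        exact hInt0 (φ i)
      rw [this]
      exact tendsto_const_nhds
    exact tendsto_nhds_unique h1 h2
  -- nonnegativity in the limit
  have hu_nonneg : ∀ t ∈ Set.Icc a b, 0 ≤ ∑ j, u j * g j t := by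
    intro t ht
    apply ge_of_tendsto (hconv (fun j => g j t))
    have hev : ∀ᶠ i in Filter.atTop, ∀ l, t < q l - εs (φ i) ∨ q l ≤ t := by
      rw [Filter.eventually_all]
      intro l
      rcases le_or_gt (q l) t with h | h
      · exact Filter.Eventually.of_forall (fun i => Or.inr h)
      · obtain ⟨K, hK⟩ := exists_nat_gt (ε₀ / (q l - t))
        filter_upwards [Filter.eventually_ge_atTop K] with i hi
        left
        have hφi : (K:ℝ) ≤ (φ i : ℝ) := by
          have h1 : K ≤ φ i := le_trans hi (hφmono.le_apply)
          exact_mod_cast h1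
        have h2 : ε₀ / (q l - t) < (φ i : ℝ) + 2 := by linarith
        have h3 : εs (φ i) < q l - t := by
          rw [hεs]
          rw [div_lt_iff₀ (by positivity)]
          rw [div_lt_iff₀ (by linarith)] at h2
          linarith
        linarith
    filter_upwards [hev] with i hi
    exact hc2 (φ i) t ht hi
  -- the limit function
  set p : ℝ → ℝ := fun t => ∑ j, u j * g j t with hp
  have hpcont : ContinuousOn p (Set.Icc a b) := by
    apply continuousOn_finset_sum
    intro j _
    exact continuousOn_const.mul (hg j)
  have hInteg : ∀ j : Fin (2*n'+1+1), IntervalIntegrable (fun t => g j t * ω t) volume a b :=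
    fun j => ((hg j).mul hω).intervalIntegrable_of_Icc (le_of_lt hab)
  have hip : ∫ t in a..b, p t * ω t = 0 := by
    have h1 : ∀ t, p t * ω t = ∑ j, u j * (g j t * ω t) := by
      intro t
      rw [hp]
      simp only []
      rw [Finset.sum_mul]
      apply Finset.sum_congr rfl
      intro j _
      ring
    calc ∫ t in a..b, p t * ω t = ∫ t in a..b, ∑ j, u j * (g j t * ω t) := by
          apply intervalIntegral.integral_congr
          intro t _
          exact h1 t
      _ = ∑ j, ∫ t in a..b, u j * (g j t * ω t) :=
          intervalIntegral.integral_finset_sum (fun j _ => (hInteg j).const_mul (u j))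
      _ = ∑ j, u j * ∫ t in a..b, g j t * ω t := by
          apply Finset.sum_congr rfl
          intro j _
          exact intervalIntegral.integral_const_mul _ _
      _ = 0 := hu_int
  -- p vanishes identically
  have hp0 : ∀ t ∈ Set.Icc a b, p t = 0 := by
    intro t ht
    by_contra hpt
    have hppos : 0 < p t := lt_of_le_of_ne (hu_nonneg t ht) (Ne.symm hpt)
    have : 0 < ∫ s in a..b, p s * ω s := by
      apply aux_integral_pos hab (hpcont.mul hω)
        (fun s hs => mul_nonneg (hu_nonneg s hs) (le_of_lt (hωpos s hs))) ht
      exact mul_pos hppos (hωpos t ht)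
    rw [hip] at this
    exact lt_irrefl 0 this
  -- contradiction via invertibility
  obtain ⟨e, he, hem⟩ := aux_equally_spaced hab (2*n'+1+1)
  have hdet : (Matrix.of fun i j => g j (e i)).det ≠ 0 := hT' e he hem
  have hmv : (Matrix.of fun i j => g j (e i)).mulVec u = 0 := by
    funext i
    show ∑ j, (Matrix.of fun i j => g j (e i)) i j * u j = 0
    calc ∑ j, (Matrix.of fun i j => g j (e i)) i j * u j
        = ∑ j, u j * g j (e i) := by
          apply Finset.sum_congr rfl
          intro j _
          simp only [Matrix.of_apply]
          ring
      _ = 0 := hp0 (e i) (hem i)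
  have hu0 : u = 0 := Matrix.eq_zero_of_mulVec_eq_zero hdet hmv
  rw [hu0, norm_zero] at hu_norm
  exact zero_ne_one hu_norm
end

section
/- Let F be a finite-dimensional subspace of C¹[a,b] (a < b), let a = x_1 < … < x_n = b, and let D = P⁻¹Q be a closed diagonal-norm F-based SBP operator on these nodes with P = diag(w_1, …, w_n). Then the closed quadrature rule with nodes x_1, …, x_n and weights w_1, …, w_n is positive and exact (with weight function ω = 1) for every element of (FF)' := {(fg)' : f, g ∈ F}; that is, for all f, g ∈ F, Σ_{k=1}^n w_k (fg)'(x_k) = ∫_a^b (fg)'(x) dx = f(b)g(b) − f(a)g(a). -/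
/-!
Multiplying the defining relation `P⁻¹ Q f = f'` by `P` gives `Q f = P f'` on `F`. Hence
`Σ w_k (fg)'(x_k) = f ⬝ P g' + P f' ⬝ g = f ⬝ Q g + Q f ⬝ g = f ⬝ (Q + Qᵀ) g = f ⬝ B g`, which is
`f(b) g(b) - f(a) g(a)`; the integral has the same value by the fundamental theorem of calculus.
-/

open MeasureTheory Matrix

/-- The boundary matrix `B = diag(-1, 0, …, 0, 1)` of size `(n+1) × (n+1)`. -/
noncomputable def sbpBoundaryMatrix (n : ℕ) : Matrix (Fin (n + 1)) (Fin (n + 1)) ℝ :=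
  Matrix.diagonal fun i => (if i = Fin.last n then (1 : ℝ) else 0) + (if i = 0 then -1 else 0)

lemma dotProduct_sbpBoundaryMatrix_mulVec {n : ℕ} (u v : Fin (n + 1) → ℝ) :
    u ⬝ᵥ (sbpBoundaryMatrix n *ᵥ v) = u (Fin.last n) * v (Fin.last n) - u 0 * v 0 := by
  simp only [sbpBoundaryMatrix, mulVec_diagonal, dotProduct, add_mul, mul_add, ite_mul,
    mul_ite, one_mul, zero_mul, mul_zero, Finset.sum_add_distrib, Finset.sum_ite_eq',
    Finset.mem_univ, if_true]
  ring

lemma dotProduct_mulVec_add_mulVec_dotProduct_of_add_transpose_eq {n : ℕ}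
    {Q : Matrix (Fin (n + 1)) (Fin (n + 1)) ℝ} (hQ : Q + Qᵀ = sbpBoundaryMatrix n)
    (u v : Fin (n + 1) → ℝ) :
    u ⬝ᵥ (Q *ᵥ v) + (Q *ᵥ u) ⬝ᵥ v = u (Fin.last n) * v (Fin.last n) - u 0 * v 0 := by
  rw [← dotProduct_sbpBoundaryMatrix_mulVec, ← hQ, add_mulVec, dotProduct_add,
    dotProduct_mulVec u Qᵀ, vecMul_transpose, dotProduct_comm (Q *ᵥ u)]

lemma mulVec_eq_of_diagonal_inv_mul_mulVec_eq {ι K : Type*} [Fintype ι] [DecidableEq ι]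
    [Field K] {w : ι → K} (hw : ∀ k, w k ≠ 0) {Q : Matrix ι ι K} {u d : ι → K}
    (h : ((diagonal w)⁻¹ * Q) *ᵥ u = d) :
    Q *ᵥ u = fun k => w k * d k := by
  have hdet : IsUnit (diagonal w).det := by
    rw [det_diagonal, isUnit_iff_ne_zero]
    exact Finset.prod_ne_zero_iff.mpr fun k _ => hw k
  calc Q *ᵥ u = diagonal w *ᵥ (((diagonal w)⁻¹ * Q) *ᵥ u) := by
        rw [mulVec_mulVec, ← Matrix.mul_assoc, mul_nonsing_inv _ hdet, Matrix.one_mul]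
    _ = fun k => w k * d k := by rw [h]; exact funext (mulVec_diagonal w d)

theorem sbp_operator_yields_exact_quadrature_general
    (a b : ℝ)
    (F : Submodule ℝ (ℝ → ℝ)) (hFC1 : ∀ f ∈ F, ContDiff ℝ 1 f)
    (n : ℕ) (x : Fin (n + 1) → ℝ)
    (hxa : x 0 = a) (hxb : x (Fin.last n) = b)
    (w : Fin (n + 1) → ℝ) (hw : ∀ k, 0 < w k)
    (Q : Matrix (Fin (n + 1)) (Fin (n + 1)) ℝ)
    (hQ : Q + Qᵀ = sbpBoundaryMatrix n)
    (hD : ∀ f ∈ F, ((Matrix.diagonal w)⁻¹ * Q) *ᵥ (fun k => f (x k)) =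
      fun k => deriv f (x k)) :
    ∀ f ∈ F, ∀ g ∈ F,
      (∫ t in a..b, deriv (fun y => f y * g y) t) = f b * g b - f a * g a ∧
      ∑ k, w k * deriv (fun y => f y * g y) (x k) = f b * g b - f a * g a := by
  intro f hf g hg
  have hfg : ContDiff ℝ 1 (fun y => f y * g y) := (hFC1 f hf).mul (hFC1 g hg)
  refine ⟨intervalIntegral.integral_deriv_of_contDiffOn_uIcc hfg.contDiffOn, ?_⟩
  have hw0 : ∀ k, w k ≠ 0 := fun k => (hw k).ne'
  calc ∑ k, w k * deriv (fun y => f y * g y) (x k)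
      = (fun k => f (x k)) ⬝ᵥ (Q *ᵥ fun k => g (x k))
          + (Q *ᵥ fun k => f (x k)) ⬝ᵥ fun k => g (x k) := by
        rw [mulVec_eq_of_diagonal_inv_mul_mulVec_eq hw0 (hD f hf),
          mulVec_eq_of_diagonal_inv_mul_mulVec_eq hw0 (hD g hg)]
        simp only [dotProduct, ← Finset.sum_add_distrib]
        refine Finset.sum_congr rfl fun k _ => ?_
        rw [deriv_fun_mul ((hFC1 f hf).differentiable one_ne_zero _)
          ((hFC1 g hg).differentiable one_ne_zero _)]
        ring
    _ = f b * g b - f a * g a := by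
        rw [dotProduct_mulVec_add_mulVec_dotProduct_of_add_transpose_eq hQ, hxa, hxb]

/-- A closed diagonal-norm `F`-based SBP operator yields a positive closed
quadrature rule that is exact (with weight function `1`) for every element of
`(FF)' = {(fg)' : f, g ∈ F}`. -/
theorem sbp_operator_yields_exact_quadrature
    (a b : ℝ) (hab : a < b)
    (F : Submodule ℝ (ℝ → ℝ)) (hFC1 : ∀ f ∈ F, ContDiff ℝ 1 f)
    (hFfin : FiniteDimensional ℝ F)
    (n : ℕ) (x : Fin (n + 1) → ℝ) (hx : StrictMono x)
    (hxa : x 0 = a) (hxb : x (Fin.last n) = b)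
    (w : Fin (n + 1) → ℝ) (hw : ∀ k, 0 < w k)
    (Q : Matrix (Fin (n + 1)) (Fin (n + 1)) ℝ)
    (hQ : Q + Qᵀ = sbpBoundaryMatrix n)
    (hD : ∀ f ∈ F, ((Matrix.diagonal w)⁻¹ * Q) *ᵥ (fun k => f (x k)) =
      fun k => deriv f (x k)) :
    ∀ f ∈ F, ∀ g ∈ F,
      (∫ t in a..b, deriv (fun y => f y * g y) t) = f b * g b - f a * g a ∧
      ∑ k, w k * deriv (fun y => f y * g y) (x k) = f b * g b - f a * g a :=
  sbp_operator_yields_exact_quadrature_general a b F hFC1 n x hxa hxb w hw Q hQ hD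
end

section
/- Let F be a finite-dimensional subspace of C¹[a,b] (a < b), let a = x_1 < … < x_n = b be closed nodes at which the evaluation map F → ℝⁿ, f ↦ (f(x_1), …, f(x_n)), is injective, and let w_1, …, w_n > 0 be weights such that Σ_{k=1}^n w_k (fg)'(x_k) = f(b)g(b) − f(a)g(a) for all f, g ∈ F (i.e., the closed positive quadrature rule is exact for (FF)' := {(fg)' : f, g ∈ F} with weight function ω = 1). Then there exists a matrix Q with Q + Qᵀ = B := diag(−1,0,…,0,1) such that D := diag(w_1,…,w_n)⁻¹ Q satisfies D·(f(x_1),…,f(x_n))ᵀ = (f'(x_1),…,f'(x_n))ᵀ for every f ∈ F; that is, a closed diagonal-norm F-based SBP operator on these nodes exists. -/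
/-!
Choose a basis of `F` and let `V`, `V'` be the matrices of values and derivatives of the basis
functions at the nodes, and `P = diag w`. We look for `Q` with `Q + Qᵀ = B` and `Q V = P V'`; then
`P⁻¹ Q` differentiates `F` exactly. Exactness of the quadrature on `(FF)'` says precisely that
`Vᵀ (P V') + (P V')ᵀ V = Vᵀ B V`, and injectivity of the nodal evaluation gives a left inverse `L`
of `V`. Writing `Q = S + B / 2`, the remaining requirement is a skew-symmetric `S` with `S V = T`
for a `T` such that `Vᵀ T` is skew, and `S = T L - (T L)ᵀ - Lᵀ (Vᵀ T) L` is one.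
-/

open Matrix

namespace Matrix

variable {R n m : Type*} [CommRing R] [Fintype n] [Fintype m] [DecidableEq m]

theorem exists_add_transpose_eq_zero_and_mul_eq {V T : Matrix n m R} {L : Matrix m n R}
    (hL : L * V = 1) (hT : Vᵀ * T + Tᵀ * V = 0) :
    ∃ S : Matrix n n R, S + Sᵀ = 0 ∧ S * V = T := by
  refine ⟨T * L - (T * L)ᵀ - Lᵀ * (Vᵀ * T) * L, ?_, ?_⟩
  · rw [← neg_eq_zero, ← Matrix.zero_mul L, ← Matrix.mul_zero Lᵀ, ← hT]
    simp only [transpose_sub, transpose_mul, transpose_transpose, Matrix.mul_add, Matrix.add_mul,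
      Matrix.mul_assoc]
    abel
  · have hTV : Tᵀ * V = -(Vᵀ * T) := eq_neg_of_add_eq_zero_right hT
    simp only [Matrix.sub_mul, Matrix.mul_assoc, hL, Matrix.mul_one, transpose_mul, hTV,
      Matrix.mul_neg]
    abel

theorem exists_add_transpose_eq_and_mul_eq [Invertible (2 : R)] {B : Matrix n n R}
    (hB : Bᵀ = B) {V Y : Matrix n m R} {L : Matrix m n R} (hL : L * V = 1)
    (hY : Vᵀ * Y + Yᵀ * V = Vᵀ * B * V) :
    ∃ Q : Matrix n n R, Q + Qᵀ = B ∧ Q * V = Y := by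
  have hT : Vᵀ * (Y - (⅟2 : R) • (B * V)) + (Y - (⅟2 : R) • (B * V))ᵀ * V = 0 := by
    simp only [transpose_sub, transpose_smul, transpose_mul, hB, Matrix.mul_sub, Matrix.sub_mul,
      Matrix.mul_smul, Matrix.smul_mul]
    rw [sub_add_sub_comm, hY, ← Matrix.mul_assoc, ← add_smul, invOf_two_add_invOf_two, one_smul,
      sub_self]
  obtain ⟨S, hS, hSV⟩ := exists_add_transpose_eq_zero_and_mul_eq hL hT
  refine ⟨S + (⅟2 : R) • B, ?_, ?_⟩
  · rw [transpose_add, transpose_smul, hB, add_add_add_comm, hS, zero_add, ← add_smul,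
      invOf_two_add_invOf_two, one_smul]
  · rw [Matrix.add_mul, hSV, Matrix.smul_mul, sub_add_cancel]

theorem exists_mul_eq_one_of_mulVec_injective {K : Type*} [Field K] [DecidableEq n]
    {V : Matrix n m K} (hV : Function.Injective V.mulVec) : ∃ L : Matrix m n K, L * V = 1 := by
  obtain ⟨g, hg⟩ := (toLin' V).exists_leftInverse_of_injective (LinearMap.ker_eq_bot.mpr hV)
  refine ⟨LinearMap.toMatrix' g, ?_⟩
  rw [← LinearMap.toMatrix'_toLin' V, ← LinearMap.toMatrix'_comp, hg, LinearMap.toMatrix'_id]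

end Matrix

theorem LinearMap.toMatrix_basisFun_mulVec_equivFun {R M ι κ : Type*} [CommRing R]
    [AddCommGroup M] [Module R M] [Fintype ι] [DecidableEq ι] [Fintype κ] [DecidableEq κ]
    (b : Module.Basis ι R M) (f : M →ₗ[R] κ → R) (v : M) :
    toMatrix b (Pi.basisFun R κ) f *ᵥ b.equivFun v = f v := by
  ext k
  simpa using congrFun (toMatrix_mulVec_repr b (Pi.basisFun R κ) f v) k

theorem LinearMap.toMatrix_basisFun_mulVec_injective {R M ι κ : Type*} [CommRing R]
    [AddCommGroup M] [Module R M] [Fintype ι] [DecidableEq ι] [Fintype κ] [DecidableEq κ]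
    (b : Module.Basis ι R M) {f : M →ₗ[R] κ → R} (hf : Function.Injective f) :
    Function.Injective (toMatrix b (Pi.basisFun R κ) f).mulVec := by
  intro c d hcd
  rw [← b.equivFun.apply_symm_apply c, ← b.equivFun.apply_symm_apply d,
    toMatrix_basisFun_mulVec_equivFun, toMatrix_basisFun_mulVec_equivFun] at hcd
  rw [← b.equivFun.apply_symm_apply c, ← b.equivFun.apply_symm_apply d, hf hcd]

theorem sbpBoundaryMatrix_transpose (n : ℕ) : (sbpBoundaryMatrix n)ᵀ = sbpBoundaryMatrix n :=
  diagonal_transpose _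

theorem transpose_mul_sbpBoundaryMatrix_mul_apply {n : ℕ} {ι : Type*} [Fintype ι]
    (V : Matrix (Fin (n + 1)) ι ℝ) (i j : ι) :
    (Vᵀ * sbpBoundaryMatrix n * V) i j = V (Fin.last n) i * V (Fin.last n) j - V 0 i * V 0 j := by
  rw [mul_apply]
  simp only [sbpBoundaryMatrix, mul_diagonal, transpose_apply, mul_add, add_mul, mul_ite, ite_mul,
    mul_one, mul_zero, zero_mul, mul_neg, neg_mul, Finset.sum_add_distrib, Finset.sum_ite_eq',
    Finset.mem_univ, if_true]
  ring

section Nodes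

variable (F : Submodule ℝ (ℝ → ℝ)) {κ : Type*} (x : κ → ℝ)

def evalAtNodes : F →ₗ[ℝ] κ → ℝ where
  toFun f k := (f : ℝ → ℝ) (x k)
  map_add' _ _ := rfl
  map_smul' _ _ := rfl

noncomputable def derivAtNodes (hF : ∀ f ∈ F, Differentiable ℝ f) : F →ₗ[ℝ] κ → ℝ where
  toFun f k := deriv f (x k)
  map_add' f g := funext fun _ => deriv_add (hF f f.2 _) (hF g g.2 _)
  map_smul' c f := funext fun _ => deriv_const_smul c (hF f f.2 _)

theorem evalAtNodes_injective (hinj : ∀ f ∈ F, (∀ k, f (x k) = 0) → f = 0) :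
    Function.Injective (evalAtNodes F x) :=
  (injective_iff_map_eq_zero _).mpr fun f hf => Subtype.ext (hinj f f.2 (congrFun hf))

end Nodes

theorem transpose_mul_add_transpose_mul_eq_of_exact_quadrature {F : Submodule ℝ (ℝ → ℝ)}
    (hF : ∀ f ∈ F, Differentiable ℝ f) {ι : Type*} [Fintype ι] [DecidableEq ι]
    (b : Module.Basis ι ℝ F) (a c : ℝ) {n : ℕ} (x : Fin (n + 1) → ℝ)
    (hxa : x 0 = a) (hxc : x (Fin.last n) = c) (w : Fin (n + 1) → ℝ)
    (hquad : ∀ f ∈ F, ∀ g ∈ F,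
      ∑ k, w k * deriv (fun y => f y * g y) (x k) = f c * g c - f a * g a) :
    let V := LinearMap.toMatrix b (Pi.basisFun ℝ _) (evalAtNodes F x)
    let Y := diagonal w * LinearMap.toMatrix b (Pi.basisFun ℝ _) (derivAtNodes F x hF)
    Vᵀ * Y + Yᵀ * V = Vᵀ * sbpBoundaryMatrix n * V := by
  intro V Y
  ext i j
  rw [transpose_mul_sbpBoundaryMatrix_mul_apply]
  simp only [V, Y, Matrix.add_apply, mul_apply, transpose_apply, LinearMap.toMatrix_apply,
    Pi.basisFun_repr, evalAtNodes, derivAtNodes, LinearMap.coe_mk, AddHom.coe_mk, diagonal_apply,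
    ite_mul, zero_mul, Finset.sum_ite_eq, Finset.mem_univ, if_true, hxa, hxc]
  rw [← hquad _ (b i).2 _ (b j).2, ← Finset.sum_add_distrib]
  refine Finset.sum_congr rfl fun k _ => ?_
  rw [deriv_fun_mul (hF _ (b i).2 _) (hF _ (b j).2 _)]
  ring

theorem exact_quadrature_yields_sbp_operator_general
    (a b : ℝ)
    (F : Submodule ℝ (ℝ → ℝ)) (hFC1 : ∀ f ∈ F, ContDiff ℝ 1 f)
    (hFfin : FiniteDimensional ℝ F)
    (n : ℕ) (x : Fin (n + 1) → ℝ)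
    (hxa : x 0 = a) (hxb : x (Fin.last n) = b)
    (hinj : ∀ f ∈ F, (∀ k, f (x k) = 0) → f = 0)
    (w : Fin (n + 1) → ℝ) (hw : ∀ k, 0 < w k)
    (hquad : ∀ f ∈ F, ∀ g ∈ F,
      ∑ k, w k * deriv (fun y => f y * g y) (x k) = f b * g b - f a * g a) :
    ∃ Q : Matrix (Fin (n + 1)) (Fin (n + 1)) ℝ,
      Q + Qᵀ = sbpBoundaryMatrix n ∧
      ∀ f ∈ F, ((Matrix.diagonal w)⁻¹ * Q) *ᵥ (fun k => f (x k)) =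
        fun k => deriv f (x k) := by
  have hF : ∀ f ∈ F, Differentiable ℝ f := fun f hf => (hFC1 f hf).differentiable one_ne_zero
  let β := Module.finBasis ℝ F
  let V := LinearMap.toMatrix β (Pi.basisFun ℝ _) (evalAtNodes F x)
  let V' := LinearMap.toMatrix β (Pi.basisFun ℝ _) (derivAtNodes F x hF)
  obtain ⟨L, hL⟩ := exists_mul_eq_one_of_mulVec_injective
    (LinearMap.toMatrix_basisFun_mulVec_injective β (evalAtNodes_injective F x hinj))
  obtain ⟨Q, hQB, hQV⟩ := exists_add_transpose_eq_and_mul_eq (sbpBoundaryMatrix_transpose n) hL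
    (transpose_mul_add_transpose_mul_eq_of_exact_quadrature hF β a b x hxa hxb w hquad)
  have hP : IsUnit (diagonal w).det := by
    simpa [det_diagonal, isUnit_iff_ne_zero, Finset.prod_ne_zero_iff] using fun k => (hw k).ne'
  have hD : (diagonal w)⁻¹ * Q * V = V' := by
    rw [Matrix.mul_assoc, hQV, ← Matrix.mul_assoc, nonsing_inv_mul _ hP, Matrix.one_mul]
  refine ⟨Q, hQB, fun f hf => ?_⟩
  calc ((diagonal w)⁻¹ * Q) *ᵥ (fun k => f (x k))
      = ((diagonal w)⁻¹ * Q) *ᵥ (V *ᵥ β.equivFun ⟨f, hf⟩) := by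
        rw [LinearMap.toMatrix_basisFun_mulVec_equivFun]; rfl
    _ = V' *ᵥ β.equivFun ⟨f, hf⟩ := by rw [mulVec_mulVec, hD]
    _ = fun k => deriv f (x k) := LinearMap.toMatrix_basisFun_mulVec_equivFun β _ _

/-- If a closed positive quadrature rule, on nodes at which the evaluation of `F`
is injective, is exact for `(FF)' = {(fg)' : f, g ∈ F}` (with weight function `1`),
then a closed diagonal-norm `F`-based SBP operator on these nodes exists. -/
theorem exact_quadrature_yields_sbp_operator
    (a b : ℝ) (hab : a < b)
    (F : Submodule ℝ (ℝ → ℝ)) (hFC1 : ∀ f ∈ F, ContDiff ℝ 1 f)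
    (hFfin : FiniteDimensional ℝ F)
    (n : ℕ) (x : Fin (n + 1) → ℝ) (hx : StrictMono x)
    (hxa : x 0 = a) (hxb : x (Fin.last n) = b)
    (hinj : ∀ f ∈ F, (∀ k, f (x k) = 0) → f = 0)
    (w : Fin (n + 1) → ℝ) (hw : ∀ k, 0 < w k)
    (hquad : ∀ f ∈ F, ∀ g ∈ F,
      ∑ k, w k * deriv (fun y => f y * g y) (x k) = f b * g b - f a * g a) :
    ∃ Q : Matrix (Fin (n + 1)) (Fin (n + 1)) ℝ,
      Q + Qᵀ = sbpBoundaryMatrix n ∧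
      ∀ f ∈ F, ((Matrix.diagonal w)⁻¹ * Q) *ᵥ (fun k => f (x k)) =
        fun k => deriv f (x k) :=
  exact_quadrature_yields_sbp_operator_general a b F hFC1 hFfin n x hxa hxb hinj w hw hquad
end

section
/- Let n ≥ 1, let a < b, let g_1, …, g_{2n} ∈ C¹[a,b] be linearly independent, let ω be a continuous, strictly positive weight function on [a,b], let x_1 < … < x_n be distinct points in [a,b], and suppose σ_1, …, σ_n, η_1, …, η_n ∈ span{g_1, …, g_{2n}} satisfy σ_i(x_k) = 0, σ_i'(x_k) = δ_{ik}, η_i(x_k) = δ_{ik}, η_i'(x_k) = 0 for all i, k = 1, …, n. Then there exist weights w_1, …, w_n with ∫_a^b g_j(x)ω(x) dx = Σ_{k=1}^n w_k g_j(x_k) for all j = 1, …, 2n if and only if ∫_a^b σ_i(x)ω(x) dx = 0 for all i = 1, …, n; and in that case the weights are necessarily w_i = ∫_a^b η_i(x)ω(x) dx for i = 1, …, n. -/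
/-!
For fixed weights, exactness of the rule `f ↦ ∑ k, w k * f (x k)` for `∫ f ω` is a linear
condition on `f`, so it holds on `span g` iff it holds on a basis of it. The family `σ, η` is
such a basis: values and derivatives at the nodes form a dual family to it, so it is linearly
independent, and it has `2n = dim (span g)` members. Exactness on `σ i` reads `∫ σ i ω = 0`
because `σ i` vanishes at every node, and on `η i` it reads `w i = ∫ η i ω`.
-/

open MeasureTheory Set Submodule

section SpanLemmas

variable {𝕜 : Type*} [NontriviallyNormedField 𝕜]

theorem contDiff_of_mem_span_range {E F ι : Type*} [NormedAddCommGroup E] [NormedSpace 𝕜 E]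
    [NormedAddCommGroup F] [NormedSpace 𝕜 F] [Fintype ι] {n : WithTop ℕ∞} {g : ι → E → F}
    (hg : ∀ j, ContDiff 𝕜 n (g j)) {f : E → F} (hf : f ∈ span 𝕜 (range g)) :
    ContDiff 𝕜 n f := by
  obtain ⟨c, rfl⟩ := (mem_span_range_iff_exists_fun 𝕜).mp hf
  rw [Finset.sum_fn]
  exact ContDiff.sum fun j _ => (hg j).const_smul (c j)

theorem span_range_eq_of_linearIndependent {K V ι κ : Type*} [DivisionRing K] [AddCommGroup V]
    [Module K V] [Fintype ι] [Fintype κ] {g : ι → V} {v : κ → V}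
    (hg : LinearIndependent K g) (hv : LinearIndependent K v)
    (hmem : ∀ k, v k ∈ span K (range g)) (hcard : Fintype.card ι ≤ Fintype.card κ) :
    span K (range v) = span K (range g) :=
  have := FiniteDimensional.span_of_finite K (finite_range g)
  eq_of_le_of_finrank_le (span_le.mpr <| range_subset_iff.mpr hmem) <| by
    rwa [finrank_span_eq_card hg, finrank_span_eq_card hv]

theorem linearIndependent_sum_elim_of_hermite {ι : Type*} [Fintype ι] [DecidableEq ι]
    {x : ι → 𝕜} {σ η : ι → 𝕜 → 𝕜}
    (hσd : ∀ i k, DifferentiableAt 𝕜 (σ i) (x k)) (hηd : ∀ i k, DifferentiableAt 𝕜 (η i) (x k))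
    (hσ0 : ∀ i k, σ i (x k) = 0) (hσ' : ∀ i k, deriv (σ i) (x k) = if i = k then 1 else 0)
    (hη1 : ∀ i k, η i (x k) = if i = k then 1 else 0) (hη' : ∀ i k, deriv (η i) (x k) = 0) :
    LinearIndependent 𝕜 (Sum.elim σ η) := by
  rw [Fintype.linearIndependent_iff]
  intro c hc
  have hval (k : ι) : c (.inr k) = 0 := by
    simpa [Fintype.sum_sum_type, Finset.sum_apply, hσ0, hη1] using congrFun hc (x k)
  have hder (k : ι) : c (.inl k) = 0 := by
    have hdiff : ∀ s, DifferentiableAt 𝕜 (Sum.elim σ η s) (x k) := by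
      rintro (i | i)
      exacts [hσd i k, hηd i k]
    have hd := HasDerivAt.sum fun s (_ : s ∈ Finset.univ) => (hdiff s).hasDerivAt.const_smul (c s)
    rw [hc] at hd
    simpa [Fintype.sum_sum_type, hσ', hη'] using hd.unique (hasDerivAt_const (x k) (0 : 𝕜))
  rintro (i | i)
  exacts [hder i, hval i]

end SpanLemmas

section Quadrature

variable {ι : Type*} [Fintype ι] (ω : ℝ → ℝ) (a b : ℝ) (x w : ι → ℝ)

def exactQuadratureSubmodule : Submodule ℝ (ℝ → ℝ) where
  carrier := {f | IntervalIntegrable (fun t => f t * ω t) volume a b ∧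
    ∫ t in a..b, f t * ω t = ∑ k, w k * f (x k)}
  zero_mem' := by simp
  add_mem' := by
    rintro f h ⟨hfi, hf⟩ ⟨hhi, hh⟩
    simp only [Pi.add_apply, add_mul, mul_add, Finset.sum_add_distrib, mem_ofPred_eq]
    exact ⟨hfi.add hhi, by rw [intervalIntegral.integral_add hfi hhi, hf, hh]⟩
  smul_mem' := by
    rintro c f ⟨hfi, hf⟩
    simp only [Pi.smul_apply, smul_eq_mul, mul_assoc, mem_ofPred_eq, mul_left_comm _ c]
    exact ⟨hfi.const_mul c, by rw [intervalIntegral.integral_const_mul, hf, Finset.mul_sum]⟩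

variable {ω a b x w}

theorem mem_exactQuadratureSubmodule_iff {f : ℝ → ℝ}
    (hf : IntervalIntegrable (fun t => f t * ω t) volume a b) :
    f ∈ exactQuadratureSubmodule ω a b x w ↔ ∫ t in a..b, f t * ω t = ∑ k, w k * f (x k) :=
  and_iff_right hf

theorem span_le_exactQuadratureSubmodule_iff {s : Set (ℝ → ℝ)}
    (hs : ∀ f ∈ s, IntervalIntegrable (fun t => f t * ω t) volume a b) :
    span ℝ s ≤ exactQuadratureSubmodule ω a b x w ↔
      ∀ f ∈ s, ∫ t in a..b, f t * ω t = ∑ k, w k * f (x k) := by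
  rw [span_le]
  exact forall₂_congr fun f hf => mem_exactQuadratureSubmodule_iff (hs f hf)

end Quadrature

theorem gauss_weights_iff_sigma_integrals_vanish_general
    (n : ℕ) (a b : ℝ) (hab : a < b)
    (g : Fin (2 * n) → ℝ → ℝ) (hg : ∀ j, ContDiff ℝ 1 (g j))
    (hgli : LinearIndependent ℝ g)
    (ω : ℝ → ℝ) (hω : ContinuousOn ω (Set.Icc a b))
    (x : Fin n → ℝ)
    (σ η : Fin n → ℝ → ℝ)
    (hσmem : ∀ i, σ i ∈ Submodule.span ℝ (Set.range g))
    (hηmem : ∀ i, η i ∈ Submodule.span ℝ (Set.range g))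
    (hσ0 : ∀ i k, σ i (x k) = 0)
    (hσ' : ∀ i k, deriv (σ i) (x k) = if i = k then 1 else 0)
    (hη1 : ∀ i k, η i (x k) = if i = k then 1 else 0)
    (hη' : ∀ i k, deriv (η i) (x k) = 0) :
    ((∃ w : Fin n → ℝ, ∀ j, ∫ t in a..b, g j t * ω t = ∑ k, w k * g j (x k)) ↔
      ∀ i, ∫ t in a..b, σ i t * ω t = 0) ∧
    ∀ w : Fin n → ℝ, (∀ j, ∫ t in a..b, g j t * ω t = ∑ k, w k * g j (x k)) →
      ∀ i, w i = ∫ t in a..b, η i t * ω t := by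
  have hint : ∀ f ∈ span ℝ (range g), IntervalIntegrable (fun t => f t * ω t) volume a b :=
    fun f hf => ContinuousOn.intervalIntegrable <|
      (contDiff_of_mem_span_range hg hf).continuous.continuousOn.mul (by rwa [uIcc_of_le hab.le])
  have hdiff : ∀ f ∈ span ℝ (range g), Differentiable ℝ f :=
    fun f hf => (contDiff_of_mem_span_range hg hf).differentiable one_ne_zero
  have hspan : span ℝ (range (Sum.elim σ η)) = span ℝ (range g) :=
    span_range_eq_of_linearIndependent hgli
      (linearIndependent_sum_elim_of_hermite (fun i _ => (hdiff _ (hσmem i)).differentiableAt)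
        (fun i _ => (hdiff _ (hηmem i)).differentiableAt) hσ0 hσ' hη1 hη')
      (Sum.forall.mpr ⟨hσmem, hηmem⟩) (by simp [two_mul])
  have hexact (w : Fin n → ℝ) :
      (∀ j, ∫ t in a..b, g j t * ω t = ∑ k, w k * g j (x k)) ↔
        (∀ i, σ i ∈ exactQuadratureSubmodule ω a b x w) ∧
          ∀ i, η i ∈ exactQuadratureSubmodule ω a b x w := by
    calc (∀ j, ∫ t in a..b, g j t * ω t = ∑ k, w k * g j (x k))
        ↔ span ℝ (range g) ≤ exactQuadratureSubmodule ω a b x w := by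
          rw [span_le_exactQuadratureSubmodule_iff fun f hf => hint f (subset_span hf),
            forall_mem_range]
      _ ↔ _ := by rw [← hspan, span_le, range_subset_iff, Sum.forall]; rfl
  have hσQ (w : Fin n → ℝ) (i : Fin n) :
      σ i ∈ exactQuadratureSubmodule ω a b x w ↔ ∫ t in a..b, σ i t * ω t = 0 := by
    simp [mem_exactQuadratureSubmodule_iff (hint _ (hσmem i)), hσ0]
  have hηQ (w : Fin n → ℝ) (i : Fin n) :
      η i ∈ exactQuadratureSubmodule ω a b x w ↔ ∫ t in a..b, η i t * ω t = w i := by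
    simp [mem_exactQuadratureSubmodule_iff (hint _ (hηmem i)), hη1]
  simp only [hexact, hσQ, hηQ]
  exact ⟨⟨fun ⟨_, h, _⟩ => h, fun h => ⟨_, h, fun _ => rfl⟩⟩, fun w h i => (h.2 i).symm⟩

/-- Characterisation of generalised Gauss quadrature weights via a
Hermite–Lagrange basis: given nodes `x 1 < … < x n` and functions
`σ i, η i` in the span of `g 1, …, g 2n` with `σ i (x k) = 0`,
`σ i ' (x k) = δ i k`, `η i (x k) = δ i k`, `η i ' (x k) = 0`, weights making the
rule exact for all `g j` exist iff `∫ σ i ω = 0` for all `i`, in which case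
necessarily `w i = ∫ η i ω`. -/
theorem gauss_weights_iff_sigma_integrals_vanish
    (n : ℕ) (hn : 1 ≤ n) (a b : ℝ) (hab : a < b)
    (g : Fin (2 * n) → ℝ → ℝ) (hg : ∀ j, ContDiff ℝ 1 (g j))
    (hgli : LinearIndependent ℝ g)
    (ω : ℝ → ℝ) (hω : ContinuousOn ω (Set.Icc a b))
    (hωpos : ∀ t ∈ Set.Icc a b, 0 < ω t)
    (x : Fin n → ℝ) (hx : StrictMono x) (hxmem : ∀ k, x k ∈ Set.Icc a b)
    (σ η : Fin n → ℝ → ℝ)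
    (hσmem : ∀ i, σ i ∈ Submodule.span ℝ (Set.range g))
    (hηmem : ∀ i, η i ∈ Submodule.span ℝ (Set.range g))
    (hσ0 : ∀ i k, σ i (x k) = 0)
    (hσ' : ∀ i k, deriv (σ i) (x k) = if i = k then 1 else 0)
    (hη1 : ∀ i k, η i (x k) = if i = k then 1 else 0)
    (hη' : ∀ i k, deriv (η i) (x k) = 0) :
    ((∃ w : Fin n → ℝ, ∀ j, ∫ t in a..b, g j t * ω t = ∑ k, w k * g j (x k)) ↔
      ∀ i, ∫ t in a..b, σ i t * ω t = 0) ∧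
    ∀ w : Fin n → ℝ, (∀ j, ∫ t in a..b, g j t * ω t = ∑ k, w k * g j (x k)) →
      ∀ i, w i = ∫ t in a..b, η i t * ω t :=
  gauss_weights_iff_sigma_integrals_vanish_general n a b hab g hg hgli ω hω x σ η hσmem hηmem hσ0
    hσ' hη1 hη'
end

section
/- Let n ≥ 1 and let P_n denote the space of real polynomial functions of degree at most n on ℝ. Then the real linear span of the set {(fg)' : f, g ∈ P_n} of derivatives of products of two elements of P_n is exactly P_{2n−1}, the space of polynomial functions of degree at most 2n−1. -/
/-!
Polynomial functions of degree `≤ m` are the images of `degreeLE ℝ m` under evaluation, so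
`(fg)' = (pq)'` has degree `≤ 2n - 1`. Conversely, `(x ^ a * x ^ b)' = (a + b) x ^ (a + b - 1)`,
and for `k ≤ 2n - 1` one can split `k + 1 = a + b` with `a, b ≤ n`.
-/

/-- The space of real polynomial functions on `ℝ` of degree at most `m`,
realised as the span of the monomials `x ^ k` for `k ≤ m`. -/
noncomputable def polyFunSpace (m : ℕ) : Submodule ℝ (ℝ → ℝ) :=
  Submodule.span ℝ {p : ℝ → ℝ | ∃ k ≤ m, p = fun x : ℝ => x ^ k}

open Polynomial

theorem polyFunSpace_eq_map_degreeLE (m : ℕ) :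
    polyFunSpace m = (degreeLE ℝ m).map (LinearMap.pi fun x : ℝ => leval x) := by
  classical
  rw [degreeLE_eq_span_X_pow, Submodule.map_span, polyFunSpace, Finset.coe_image,
    ← Set.image_comp]
  congr 1
  ext f
  simp [eq_comm, funext_iff]

theorem mem_polyFunSpace_iff {m : ℕ} {f : ℝ → ℝ} :
    f ∈ polyFunSpace m ↔ ∃ p : ℝ[X], p.natDegree ≤ m ∧ f = fun x => p.eval x := by
  simp [polyFunSpace_eq_map_degreeLE, mem_degreeLE, natDegree_le_iff_degree_le, eq_comm,
    funext_iff]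

theorem deriv_eval_mul_eval (p q : ℝ[X]) :
    deriv (fun x => p.eval x * q.eval x) = fun x => (derivative (p * q)).eval x := by
  funext x
  simp_rw [← eval_mul]
  exact Polynomial.deriv _

theorem deriv_mul_mem_polyFunSpace {m n : ℕ} {f g : ℝ → ℝ} (hf : f ∈ polyFunSpace m)
    (hg : g ∈ polyFunSpace n) : deriv (fun x => f x * g x) ∈ polyFunSpace (m + n - 1) := by
  obtain ⟨p, hp, rfl⟩ := mem_polyFunSpace_iff.1 hf
  obtain ⟨q, hq, rfl⟩ := mem_polyFunSpace_iff.1 hg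
  refine mem_polyFunSpace_iff.2 ⟨_, ?_, deriv_eval_mul_eval p q⟩
  have := natDegree_derivative_le (p * q)
  have := natDegree_mul_le (p := p) (q := q)
  omega

theorem deriv_pow_mul_pow (a b : ℕ) :
    deriv (fun x : ℝ => x ^ a * x ^ b) = fun x => ((a + b : ℕ) : ℝ) * x ^ (a + b - 1) := by
  simp_rw [← pow_add]
  funext x
  exact deriv_pow_field _

theorem pow_mem_span_deriv_mul {n k : ℕ} (hn : 1 ≤ n) (hk : k ≤ 2 * n - 1) :
    (fun x : ℝ => x ^ k) ∈ Submodule.span ℝ {h : ℝ → ℝ |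
        ∃ f ∈ polyFunSpace n, ∃ g ∈ polyFunSpace n, h = deriv (fun x => f x * g x)} := by
  set a := min n (k + 1)
  set b := k + 1 - a
  have hab : a + b = k + 1 := by omega
  have hpow (j : ℕ) (hj : j ≤ n) : (fun x : ℝ => x ^ j) ∈ polyFunSpace n :=
    Submodule.subset_span ⟨j, hj, rfl⟩
  have hmem : deriv (fun x : ℝ => x ^ a * x ^ b) ∈ Submodule.span ℝ {h : ℝ → ℝ |
      ∃ f ∈ polyFunSpace n, ∃ g ∈ polyFunSpace n, h = deriv (fun x => f x * g x)} :=
    Submodule.subset_span ⟨_, hpow a (by omega), _, hpow b (by omega), rfl⟩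
  rw [deriv_pow_mul_pow, hab, Nat.add_sub_cancel] at hmem
  convert Submodule.smul_mem _ ((k + 1 : ℕ) : ℝ)⁻¹ hmem using 1
  funext x
  simp [inv_mul_cancel_left₀ (k.cast_add_one_ne_zero : (k : ℝ) + 1 ≠ 0)]

/-- For `n ≥ 1`, the span of `{(fg)' : f, g ∈ Pₙ}` is exactly `P_{2n-1}`. -/
theorem span_deriv_products_polynomials (n : ℕ) (hn : 1 ≤ n) :
    Submodule.span ℝ {h : ℝ → ℝ |
        ∃ f ∈ polyFunSpace n, ∃ g ∈ polyFunSpace n,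
          h = deriv (fun x => f x * g x)} =
      polyFunSpace (2 * n - 1) := by
  refine le_antisymm (Submodule.span_le.2 ?_) (Submodule.span_le.2 ?_)
  · rintro h ⟨f, hf, g, hg, rfl⟩
    simpa [two_mul] using deriv_mul_mem_polyFunSpace hf hg
  · rintro h ⟨k, hk, rfl⟩
    exact pow_mem_span_deriv_mul hn hk
end

section
/- Let a > 0 and ε > 0, and let u : [0,1] × [0,∞) → ℝ be twice continuously differentiable and satisfy the advection–diffusion equation ∂_t u + a ∂_x u − ε ∂_{xx} u = 0 on [0,1] × (0,∞). Define g_L(t) := a u(0,t) − ε ∂_x u(0,t) and g_R(t) := ε ∂_x u(1,t). Then for every t > 0, d/dt ∫_0^1 u(x,t)² dx + 2ε ∫_0^1 (∂_x u(x,t))² dx = (1/a)[g_L(t)² + g_R(t)²] − (1/a)[(ε ∂_x u(0,t))² + (a u(1,t) − ε ∂_x u(1,t))²]. -/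
/-!
Differentiate under the integral sign (the time derivative of `u²` is continuous, hence bounded
on compact sets), substitute the equation `u_t = ε u_xx - a u_x`, and integrate by parts:
`∫ 2 u u_xx = [2 u u_x] - 2 ∫ u_x²` and `∫ 2 u u_x = [u²]`. The remaining boundary terms
`a (u(0)² - u(1)²) + 2ε (u(1) u_x(1) - u(0) u_x(0))` are exactly `1/a` times the stated difference
of squares of boundary data.
-/

open Function Metric intervalIntegral

section Parametric

variable {E : Type*} [NormedAddCommGroup E] [NormedSpace ℝ E]

theorem HasFDerivAt.hasDerivAt_uncurry_right {f : ℝ → ℝ → E} {f' : ℝ × ℝ →L[ℝ] E} {x s : ℝ}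
    (h : HasFDerivAt (uncurry f) f' (x, s)) : HasDerivAt (f x) (f' (0, 1)) s :=
  h.comp_hasDerivAt s ((hasDerivAt_const s x).prodMk (hasDerivAt_id s))

theorem ContDiff.hasDerivAt_uncurry_right {f : ℝ → ℝ → E} (hf : ContDiff ℝ 1 (uncurry f))
    (x s : ℝ) : HasDerivAt (f x) (deriv (f x) s) s :=
  (hf.differentiable one_ne_zero (x, s)).hasFDerivAt.hasDerivAt_uncurry_right
    |>.differentiableAt.hasDerivAt

theorem ContDiff.continuous_uncurry_deriv_right {f : ℝ → ℝ → E} (hf : ContDiff ℝ 1 (uncurry f)) :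
    Continuous (uncurry fun x s => deriv (f x) s) := by
  have h : uncurry (fun x s => deriv (f x) s) = fun p => fderiv ℝ (uncurry f) p (0, 1) := by
    ext ⟨x, s⟩
    exact ((hf.differentiable one_ne_zero (x, s)).hasFDerivAt.hasDerivAt_uncurry_right).deriv
  rw [h]
  exact (hf.continuous_fderiv one_ne_zero).clm_apply continuous_const

theorem hasDerivAt_intervalIntegral_of_continuous_uncurry {F F' : ℝ → ℝ → E} {a b : ℝ}
    (hF : Continuous (uncurry F)) (hF' : Continuous (uncurry F'))
    (h_diff : ∀ x s, HasDerivAt (F x) (F' x s) s) (s₀ : ℝ) :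
    HasDerivAt (fun s => ∫ x in a..b, F x s) (∫ x in a..b, F' x s₀) s₀ := by
  obtain ⟨M, hM⟩ := (isCompact_uIcc.prod (isCompact_closedBall s₀ 1)).exists_bound_of_continuousOn
    hF'.continuousOn
  have h_slice {G : ℝ → ℝ → E} (hG : Continuous (uncurry G)) (s : ℝ) : Continuous (G · s) :=
    hG.comp (continuous_id.prodMk continuous_const)
  refine (hasDerivAt_integral_of_dominated_loc_of_deriv_le (bound := fun _ => M)
    (closedBall_mem_nhds s₀ one_pos)
    (.of_forall fun s => (h_slice hF s).aestronglyMeasurable)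
    ((h_slice hF s₀).intervalIntegrable _ _)
    (h_slice hF' s₀).aestronglyMeasurable
    (.of_forall fun x hx s hs => hM (x, s) ⟨Set.uIoc_subset_uIcc hx, hs⟩)
    intervalIntegrable_const
    (.of_forall fun x _ s _ => h_diff x s)).2

theorem hasDerivAt_intervalIntegral_of_contDiff {F : ℝ → ℝ → E} (hF : ContDiff ℝ 1 (uncurry F))
    (a b s₀ : ℝ) :
    HasDerivAt (fun s => ∫ x in a..b, F x s) (∫ x in a..b, deriv (F x) s₀) s₀ :=
  hasDerivAt_intervalIntegral_of_continuous_uncurry hF.continuous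
    hF.continuous_uncurry_deriv_right hF.hasDerivAt_uncurry_right s₀

end Parametric

theorem integral_two_mul_mul_deriv_eq_sq_sub {v : ℝ → ℝ} (hv : ContDiff ℝ 1 v) (a b : ℝ) :
    ∫ x in a..b, 2 * v x * deriv v x = v b ^ 2 - v a ^ 2 := by
  have hd : Differentiable ℝ v := hv.differentiable one_ne_zero
  refine integral_eq_sub_of_hasDerivAt (f := fun x => v x ^ 2) (fun x _ => ?_)
    ((by fun_prop : Continuous fun x => 2 * v x * deriv v x).intervalIntegrable _ _)
  simpa [mul_comm, mul_assoc, mul_left_comm] using (hd x).hasDerivAt.fun_pow 2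

theorem integral_mul_deriv_deriv {v : ℝ → ℝ} (hv : ContDiff ℝ 2 v) (a b : ℝ) :
    ∫ x in a..b, v x * deriv (deriv v) x
      = v b * deriv v b - v a * deriv v a - ∫ x in a..b, deriv v x ^ 2 := by
  obtain ⟨hd, -, hv'⟩ := (contDiff_succ_iff_deriv (n := 1)).mp hv
  rw [integral_mul_deriv_eq_deriv_mul (fun x _ => (hd x).hasDerivAt)
    (fun x _ => (hv'.differentiable one_ne_zero x).hasDerivAt)
    (hv'.continuous.intervalIntegrable _ _) ((hv'.continuous_deriv le_rfl).intervalIntegrable _ _)]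
  simp only [sq]

theorem advection_diffusion_energy_rate_general
    (a ε : ℝ) (ha : 0 < a) (u : ℝ → ℝ → ℝ)
    (hu : ContDiff ℝ 2 (Function.uncurry u))
    (hpde : ∀ x ∈ Set.Icc (0 : ℝ) 1, ∀ t : ℝ, 0 < t →
      deriv (u x) t + a * deriv (fun y => u y t) x
        - ε * deriv (fun y => deriv (fun z => u z t) y) x = 0) :
    ∀ t : ℝ, 0 < t →
      HasDerivAt (fun s => ∫ x in (0 : ℝ)..1, u x s ^ 2)
        (1 / a * ((a * u 0 t - ε * deriv (fun y => u y t) 0) ^ 2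
            + (ε * deriv (fun y => u y t) 1) ^ 2)
          - 1 / a * ((ε * deriv (fun y => u y t) 0) ^ 2
            + (a * u 1 t - ε * deriv (fun y => u y t) 1) ^ 2)
          - 2 * ε * ∫ x in (0 : ℝ)..1, (deriv (fun y => u y t) x) ^ 2) t := by
  intro t ht
  have hu₁ : ContDiff ℝ 1 (uncurry u) := hu.of_le one_le_two
  refine (hasDerivAt_intervalIntegral_of_contDiff
    (F := fun x s => u x s ^ 2) (hu₁.pow 2) 0 1 t).congr_deriv ?_
  set v := fun y => u y t
  have hv : ContDiff ℝ 2 v := hu.comp (contDiff_id.prodMk contDiff_const)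
  obtain ⟨-, -, hv'⟩ := (contDiff_succ_iff_deriv (n := 1)).mp hv
  have hv'c : Continuous (deriv v) := hv'.continuous
  have hv''c : Continuous (deriv (deriv v)) := hv'.continuous_deriv le_rfl
  have hvc : Continuous v := hv.continuous
  calc ∫ x in (0 : ℝ)..1, deriv (fun s => u x s ^ 2) t
      = ∫ x in (0 : ℝ)..1, 2 * ε * (v x * deriv (deriv v) x) - a * (2 * v x * deriv v x) := by
        refine integral_congr fun x hx => ?_
        rw [((hu₁.hasDerivAt_uncurry_right x t).fun_pow 2).deriv]
        have := hpde x (by simpa using hx) t ht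
        linear_combination 2 * u x t * this
    _ = 2 * ε * (v 1 * deriv v 1 - v 0 * deriv v 0 - ∫ x in (0 : ℝ)..1, deriv v x ^ 2)
          - a * (v 1 ^ 2 - v 0 ^ 2) := by
        rw [intervalIntegral.integral_sub (Continuous.intervalIntegrable (by fun_prop) _ _)
          (Continuous.intervalIntegrable (by fun_prop) _ _), intervalIntegral.integral_const_mul,
          intervalIntegral.integral_const_mul, integral_mul_deriv_deriv hv,
          integral_two_mul_mul_deriv_eq_sq_sub (hv.of_le one_le_two)]
    _ = _ := by
        field_simp
        ring

/-- Energy rate for the advection–diffusion equation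
`u_t + a u_x − ε u_xx = 0` on `[0,1]`, with Robin datum
`g_L = a u(0,t) − ε u_x(0,t)` and Neumann datum `g_R = ε u_x(1,t)`:
`d/dt ∫ u² + 2ε ∫ u_x² = (1/a)[g_L² + g_R²] − (1/a)[(ε u_x(0,t))² + (a u(1,t) − ε u_x(1,t))²]`. -/
theorem advection_diffusion_energy_rate
    (a ε : ℝ) (ha : 0 < a) (hε : 0 < ε) (u : ℝ → ℝ → ℝ)
    (hu : ContDiff ℝ 2 (Function.uncurry u))
    (hpde : ∀ x ∈ Set.Icc (0 : ℝ) 1, ∀ t : ℝ, 0 < t →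
      deriv (u x) t + a * deriv (fun y => u y t) x
        - ε * deriv (fun y => deriv (fun z => u z t) y) x = 0) :
    ∀ t : ℝ, 0 < t →
      HasDerivAt (fun s => ∫ x in (0 : ℝ)..1, u x s ^ 2)
        (1 / a * ((a * u 0 t - ε * deriv (fun y => u y t) 0) ^ 2
            + (ε * deriv (fun y => u y t) 1) ^ 2)
          - 1 / a * ((ε * deriv (fun y => u y t) 0) ^ 2
            + (a * u 1 t - ε * deriv (fun y => u y t) 1) ^ 2)
          - 2 * ε * ∫ x in (0 : ℝ)..1, (deriv (fun y => u y t) x) ^ 2) t :=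
  advection_diffusion_energy_rate_general a ε ha u hu hpde
end

section
/- Let a > 0 and σ ∈ ℝ. Let P_L be a diagonal positive-definite real (N+1)×(N+1) matrix and Q_L a real (N+1)×(N+1) matrix with Q_L + Q_Lᵀ = diag(−1,0,…,0,1); let P_R be a diagonal positive-definite real (M+1)×(M+1) matrix and Q_R a real (M+1)×(M+1) matrix with Q_R + Q_Rᵀ = diag(−1,0,…,0,1). Let g_L : ℝ → ℝ, and let u : ℝ → ℝ^{N+1} and v : ℝ → ℝ^{M+1} be differentiable and satisfy the semi-discrete equations u'(t) = −a P_L⁻¹ Q_L u(t) + σ P_L⁻¹ e_N (u_N(t) − v_0(t)) − a P_L⁻¹ e_0 (u_0(t) − g_L(t)) and v'(t) = −a P_R⁻¹ Q_R v(t) + (σ − a) P_R⁻¹ ê_0 (v_0(t) − u_N(t)), where e_0, e_N are the first and last standard basis vectors of ℝ^{N+1}, ê_0 is the first standard basis vector of ℝ^{M+1}, and u_0, u_N, v_0, v_M denote the first/last components of u and v. Then for all t, d/dt (u(t)ᵀ P_L u(t) + v(t)ᵀ P_R v(t)) = a g_L(t)² − a v_M(t)² − a (u_0(t) − g_L(t))²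 + (2σ − a)(u_N(t) − v_0(t))². -/
open Matrix

section Calculus

variable {𝕜 : Type*} [NontriviallyNormedField 𝕜] {ι κ : Type*} [Fintype ι]
  {t : 𝕜}

theorem HasDerivAt.dotProduct {f g : 𝕜 → ι → 𝕜} {f' g' : ι → 𝕜}
    (hf : HasDerivAt f f' t) (hg : HasDerivAt g g' t) :
    HasDerivAt (fun s => f s ⬝ᵥ g s) (f' ⬝ᵥ g t + f t ⬝ᵥ g') t := by
  simp only [_root_.dotProduct, ← Finset.sum_add_distrib]
  exact HasDerivAt.fun_sum fun i _ => (hasDerivAt_pi.1 hf i).mul (hasDerivAt_pi.1 hg i)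

theorem HasDerivAt.mulVec (A : Matrix κ ι 𝕜) {f : 𝕜 → ι → 𝕜} {f' : ι → 𝕜}
    (hf : HasDerivAt f f' t) : HasDerivAt (fun s => A *ᵥ f s) (A *ᵥ f') t :=
  hasDerivAt_pi.2 fun k => by
    have := (hasDerivAt_const t (A k)).dotProduct hf
    rw [zero_dotProduct, zero_add] at this
    exact this

theorem HasDerivAt.dotProduct_mulVec_self {A : Matrix ι ι 𝕜} (hA : Aᵀ = A)
    {w : 𝕜 → ι → 𝕜} {w' : ι → 𝕜} (hw : HasDerivAt w w' t) :
    HasDerivAt (fun s => w s ⬝ᵥ (A *ᵥ w s)) (2 * (w t ⬝ᵥ (A *ᵥ w'))) t := by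
  convert hw.dotProduct (hw.mulVec A) using 1
  rw [dotProduct_mulVec, ← mulVec_transpose, hA, dotProduct_comm, two_mul]

end Calculus

namespace Matrix

variable {ι R : Type*} [Fintype ι]

theorem two_mul_dotProduct_mulVec_self [CommRing R] (Q : Matrix ι ι R) (w : ι → R) :
    2 * (w ⬝ᵥ (Q *ᵥ w)) = w ⬝ᵥ ((Q + Qᵀ) *ᵥ w) := by
  rw [add_mulVec, dotProduct_add, mulVec_transpose, dotProduct_mulVec w Q w,
    dotProduct_comm (w ᵥ* Q), two_mul]

variable [DecidableEq ι] [Field R]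

theorem isUnit_det_diagonal {p : ι → R} (hp : ∀ i, p i ≠ 0) : IsUnit (diagonal p).det := by
  rw [det_diagonal, isUnit_iff_ne_zero]
  exact Finset.prod_ne_zero_iff.2 fun i _ => hp i

theorem mulVec_nonsing_inv_mulVec {A : Matrix ι ι R} (hA : IsUnit A.det) (x : ι → R) :
    A *ᵥ (A⁻¹ *ᵥ x) = x := by
  rw [mulVec_mulVec, mul_nonsing_inv A hA, one_mulVec]

end Matrix

theorem dotProduct_sbpBoundaryMatrix_mulVec_self {n : ℕ} (w : Fin (n + 1) → ℝ) :
    w ⬝ᵥ (sbpBoundaryMatrix n *ᵥ w) = w (Fin.last n) ^ 2 - w 0 ^ 2 := by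
  simp only [dotProduct, sbpBoundaryMatrix, mulVec_diagonal, add_mul, ite_mul, one_mul, zero_mul,
    neg_mul, mul_add, mul_ite, mul_zero, mul_neg, Finset.sum_add_distrib, Finset.sum_ite_eq',
    Finset.mem_univ, ↓reduceIte]
  ring

theorem sbp_sat_advection_energy_rate_general
    (N M : ℕ) (a σ : ℝ)
    (pL : Fin (N + 1) → ℝ) (hpL : ∀ i, 0 < pL i)
    (QL : Matrix (Fin (N + 1)) (Fin (N + 1)) ℝ)
    (hQL : QL + QLᵀ = sbpBoundaryMatrix N)
    (pR : Fin (M + 1) → ℝ) (hpR : ∀ i, 0 < pR i)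
    (QR : Matrix (Fin (M + 1)) (Fin (M + 1)) ℝ)
    (hQR : QR + QRᵀ = sbpBoundaryMatrix M)
    (gL : ℝ → ℝ)
    (u : ℝ → Fin (N + 1) → ℝ) (v : ℝ → Fin (M + 1) → ℝ)
    (hu : ∀ t : ℝ, HasDerivAt u
      ((-a) • ((Matrix.diagonal pL)⁻¹ *ᵥ (QL *ᵥ u t))
        + (σ * (u t (Fin.last N) - v t 0)) •
            ((Matrix.diagonal pL)⁻¹ *ᵥ Pi.single (Fin.last N) 1)
        - (a * (u t 0 - gL t)) • ((Matrix.diagonal pL)⁻¹ *ᵥ Pi.single 0 1)) t)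
    (hv : ∀ t : ℝ, HasDerivAt v
      ((-a) • ((Matrix.diagonal pR)⁻¹ *ᵥ (QR *ᵥ v t))
        + ((σ - a) * (v t 0 - u t (Fin.last N))) •
            ((Matrix.diagonal pR)⁻¹ *ᵥ Pi.single 0 1)) t) :
    ∀ t : ℝ, HasDerivAt
      (fun s => u s ⬝ᵥ (Matrix.diagonal pL *ᵥ u s) + v s ⬝ᵥ (Matrix.diagonal pR *ᵥ v s))
      (a * gL t ^ 2 - a * v t (Fin.last M) ^ 2 - a * (u t 0 - gL t) ^ 2
        + (2 * σ - a) * (u t (Fin.last N) - v t 0) ^ 2) t := by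
  intro t
  have hPL := mulVec_nonsing_inv_mulVec (isUnit_det_diagonal fun i => (hpL i).ne')
  have hPR := mulVec_nonsing_inv_mulVec (isUnit_det_diagonal fun i => (hpR i).ne')
  have volL := two_mul_dotProduct_mulVec_self QL (u t)
  have volR := two_mul_dotProduct_mulVec_self QR (v t)
  rw [hQL, dotProduct_sbpBoundaryMatrix_mulVec_self] at volL
  rw [hQR, dotProduct_sbpBoundaryMatrix_mulVec_self] at volR
  refine (((hu t).dotProduct_mulVec_self (diagonal_transpose pL)).add
    ((hv t).dotProduct_mulVec_self (diagonal_transpose pR))).congr_deriv ?_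
  simp only [mulVec_add, mulVec_sub, mulVec_smul, hPL, hPR, dotProduct_add, dotProduct_sub,
    dotProduct_smul, smul_eq_mul, dotProduct_single, mul_one]
  linear_combination -a * volL - a * volR

/-- Discrete energy rate for the two-domain semi-discrete SBP–SAT scheme for
the advection equation `u_t + a u_x = 0`, with interface penalties
`σ^L = σ`, `σ^R = σ − a` and left boundary penalty `τ_L = −a`:
`d/dt (uᵀ P_L u + vᵀ P_R v) = a g_L² − a v_M² − a (u_0 − g_L)² + (2σ − a)(u_N − v_0)²`. -/
theorem sbp_sat_advection_energy_rate
    (N M : ℕ) (a σ : ℝ) (ha : 0 < a)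
    (pL : Fin (N + 1) → ℝ) (hpL : ∀ i, 0 < pL i)
    (QL : Matrix (Fin (N + 1)) (Fin (N + 1)) ℝ)
    (hQL : QL + QLᵀ = sbpBoundaryMatrix N)
    (pR : Fin (M + 1) → ℝ) (hpR : ∀ i, 0 < pR i)
    (QR : Matrix (Fin (M + 1)) (Fin (M + 1)) ℝ)
    (hQR : QR + QRᵀ = sbpBoundaryMatrix M)
    (gL : ℝ → ℝ)
    (u : ℝ → Fin (N + 1) → ℝ) (v : ℝ → Fin (M + 1) → ℝ)
    (hu : ∀ t : ℝ, HasDerivAt u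
      ((-a) • ((Matrix.diagonal pL)⁻¹ *ᵥ (QL *ᵥ u t))
        + (σ * (u t (Fin.last N) - v t 0)) •
            ((Matrix.diagonal pL)⁻¹ *ᵥ Pi.single (Fin.last N) 1)
        - (a * (u t 0 - gL t)) • ((Matrix.diagonal pL)⁻¹ *ᵥ Pi.single 0 1)) t)
    (hv : ∀ t : ℝ, HasDerivAt v
      ((-a) • ((Matrix.diagonal pR)⁻¹ *ᵥ (QR *ᵥ v t))
        + ((σ - a) * (v t 0 - u t (Fin.last N))) •
            ((Matrix.diagonal pR)⁻¹ *ᵥ Pi.single 0 1)) t) :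
    ∀ t : ℝ, HasDerivAt
      (fun s => u s ⬝ᵥ (Matrix.diagonal pL *ᵥ u s) + v s ⬝ᵥ (Matrix.diagonal pR *ᵥ v s))
      (a * gL t ^ 2 - a * v t (Fin.last M) ^ 2 - a * (u t 0 - gL t) ^ 2
        + (2 * σ - a) * (u t (Fin.last N) - v t 0) ^ 2) t :=
  sbp_sat_advection_energy_rate_general N M a σ pL hpL QL hQL pR hpR QR hQR gL u v hu hv
end
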